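/- arXiv:1907.04372 — 13 statements merged into one kernel-verified Lean document; each statement's English description precedes it below -/
import Mathlib

section
/- For a nonzero vector x in (F_{q^m})^n, the rank weight of x (the dimension over F_q of the F_q-subspace of F_{q^m} spanned by its coordinates) equals the minimum Hamming weight of x·M over all invertible n×n matrices M with entries in F_q. -/
/-!
Multiplying `x` by an invertible matrix over `F_q` does not change the `F_q`-span of its
coordinates, and the span of any vector is spanned by its nonzero coordinates, so the rank weight
is a lower bound for every `hammingNorm (x * M)`. It is attained: the columns of `M` may be any
basis of `F_q^n`, and `(x * M)_j = ∑ᵢ M_ij xᵢ` is the image of the `j`-th column under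
`c ↦ ∑ᵢ cᵢ xᵢ`. Taking for the columns a basis that extends a basis of the kernel of this map,
all but `rank x` coordinates of `x * M` vanish.
-/

open Matrix Module Submodule Set

theorem Module.Basis.sumExtend_apply_inl {K V ι : Type*} [DivisionRing K] [AddCommGroup V]
    [Module K V] {v : ι → V} (hs : LinearIndependent K v) (i : ι) :
    Basis.sumExtend hs (Sum.inl i) = v i := by
  simp [Basis.sumExtend]
  rfl

theorem LinearMap.exists_basis_card_filter_ne_zero_le_finrank_range {K V W ι : Type*}
    [DivisionRing K] [AddCommGroup V] [Module K V] [AddCommGroup W] [Module K W] [DecidableEq W]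
    [Fintype ι] (b₀ : Basis ι K V) (f : V →ₗ[K] W) :
    ∃ b : Basis ι K V, Finset.card {i | f (b i) ≠ 0} ≤ finrank K (LinearMap.range f) := by
  classical
  have := b₀.finiteDimensional_of_finite
  let c := Basis.sumExtend
    ((finBasis K (LinearMap.ker f)).linearIndependent.map' _ (LinearMap.ker f).ker_subtype)
  let e := c.indexEquiv b₀
  let kerIdx : Fin (finrank K (LinearMap.ker f)) ↪ ι :=
    ⟨e ∘ Sum.inl, e.injective.comp Sum.inl_injective⟩
  refine ⟨c.reindex e, ?_⟩
  have hsub : ({i | f (c.reindex e i) ≠ 0} : Finset ι) ⊆ (Finset.univ.map kerIdx)ᶜ := by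
    intro i hi
    simp only [Finset.mem_compl, Finset.mem_map, Finset.mem_univ, true_and, not_exists]
    rintro j rfl
    simp only [Finset.mem_filter, Finset.mem_univ, true_and, Basis.reindex_apply] at hi
    apply hi
    show f (c (e.symm (e (Sum.inl j)))) = 0
    rw [Equiv.symm_apply_apply, Basis.sumExtend_apply_inl]
    exact (finBasis K (LinearMap.ker f) j).2
  have hrank := f.finrank_range_add_finrank_ker
  rw [finrank_eq_card_basis b₀] at hrank
  calc _ ≤ _ := Finset.card_le_card hsub
    _ = finrank K (LinearMap.range f) := by
      rw [Finset.card_compl, Finset.card_map, Finset.card_univ, Fintype.card_fin]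
      omega

theorem finrank_span_range_le_hammingNorm {K V ι : Type*} [DivisionRing K] [AddCommGroup V]
    [Module K V] [Fintype ι] [DecidableEq V] (y : ι → V) :
    finrank K (span K (range y)) ≤ hammingNorm y := by
  have hsupp : range y \ {0} = range (fun i : {i // y i ≠ 0} => y i) := by
    ext v
    simp only [mem_sdiff, mem_range, mem_singleton_iff, Subtype.exists]
    aesop
  rw [← span_sdiff_singleton_zero, hsupp, hammingNorm, ← Fintype.card_subtype]
  exact finrank_range_le_card _

section vecMul

variable {K L ι κ : Type*} [Field K] [Ring L] [Algebra K L] [Fintype ι]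

theorem vecMul_map_algebraMap_apply (x : ι → L) (M : Matrix ι κ K) (j : κ) :
    (x ᵥ* M.map (algebraMap K L)) j = Fintype.linearCombination K x (fun i => M i j) := by
  simp [vecMul_apply_eq_sum, Fintype.linearCombination_apply, Algebra.smul_def, Algebra.commutes]

theorem span_range_vecMul_map_algebraMap_le (x : ι → L) (M : Matrix ι κ K) :
    span K (range (x ᵥ* M.map (algebraMap K L))) ≤ span K (range x) := by
  rw [span_le]
  rintro _ ⟨j, rfl⟩
  rw [vecMul_map_algebraMap_apply, ← Fintype.range_linearCombination]
  exact LinearMap.mem_range_self _ _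

theorem span_range_vecMul_map_algebraMap_of_isUnit_det [DecidableEq ι] (x : ι → L)
    {M : Matrix ι ι K} (hM : IsUnit M.det) :
    span K (range (x ᵥ* M.map (algebraMap K L))) = span K (range x) := by
  refine (span_range_vecMul_map_algebraMap_le x M).antisymm ?_
  have hx : x = (x ᵥ* M.map (algebraMap K L)) ᵥ* M⁻¹.map (algebraMap K L) := by
    rw [vecMul_vecMul, ← Matrix.map_mul, mul_nonsing_inv _ hM,
      Matrix.map_one _ (map_zero _) (map_one _), vecMul_one]
  conv_lhs => rw [hx]
  exact span_range_vecMul_map_algebraMap_le _ _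

theorem exists_isUnit_det_hammingNorm_vecMul_map_algebraMap_le [DecidableEq ι] [DecidableEq L]
    (x : ι → L) :
    ∃ M : Matrix ι ι K, IsUnit M.det ∧
      hammingNorm (x ᵥ* M.map (algebraMap K L)) ≤ finrank K (span K (range x)) := by
  obtain ⟨b, hb⟩ :=
    (Fintype.linearCombination K x).exists_basis_card_filter_ne_zero_le_finrank_range
      (Pi.basisFun K ι)
  have hdet := (Pi.basisFun K ι).isUnit_det b
  rw [Basis.det_apply] at hdet
  refine ⟨_, hdet, ?_⟩
  have hcol (j) : (fun i => (Pi.basisFun K ι).toMatrix b i j) = b j := by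
    ext i
    simp [Basis.toMatrix_apply]
  rw [← Fintype.range_linearCombination]
  simpa [hammingNorm, vecMul_map_algebraMap_apply, hcol] using hb

end vecMul

theorem rankWeight_eq_min_hammingNorm_general
    {Fq Fqm : Type*} [Field Fq] [Field Fqm] [Algebra Fq Fqm]
    [DecidableEq Fqm]
    {n : ℕ}
    (x : Fin n → Fqm) :
    Module.finrank Fq (Submodule.span Fq (Set.range x)) =
      sInf { w | ∃ M : Matrix (Fin n) (Fin n) Fq, IsUnit M.det ∧
        w = hammingNorm (x ᵥ* M.map (algebraMap Fq Fqm)) } := by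
  obtain ⟨M, hM, hle⟩ := exists_isUnit_det_hammingNorm_vecMul_map_algebraMap_le (K := Fq) x
  apply le_antisymm
  · refine le_csInf ⟨_, M, hM, rfl⟩ ?_
    rintro _ ⟨N, hN, rfl⟩
    rw [← span_range_vecMul_map_algebraMap_of_isUnit_det x hN]
    exact finrank_span_range_le_hammingNorm _
  · exact le_trans (Nat.sInf_le ⟨M, hM, rfl⟩) hle

/-- For a nonzero vector `x ∈ (F_{q^m})^n`, the rank weight of `x` equals the
minimum Hamming weight of `x·M` over all invertible `n×n` matrices `M` over `F_q`. -/
theorem rankWeight_eq_min_hammingNorm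
    {Fq Fqm : Type*} [Field Fq] [Field Fqm] [Algebra Fq Fqm]
    [Fintype Fq] [Fintype Fqm] [DecidableEq Fqm]
    {m n : ℕ} (hm : Module.finrank Fq Fqm = m) (hn : 0 < n)
    (x : Fin n → Fqm) (hx : x ≠ 0) :
    Module.finrank Fq (Submodule.span Fq (Set.range x)) =
      sInf { w | ∃ M : Matrix (Fin n) (Fin n) Fq, IsUnit M.det ∧
        w = hammingNorm (x ᵥ* M.map (algebraMap Fq Fqm)) } :=
  rankWeight_eq_min_hammingNorm_general x
end

section
/- Let C be an [n,k] non-degenerate linear rank metric code over F_{q^m} with generator matrix G and associated q-system X = F_q-span of the columns of G. For 1 ≤ r ≤ k, define n − d_r(X) = max{ dim_{F_q}(X ∩ Π) : Π an F_{q^m}-subspace of (F_{q^m})^k of codimension r }. Then d_r(X) = min{ dim_{F_q} S_q(D) : D an F_{q^m}-subspace of C of dimension r }, where S_q(D) is the F_q-span of the columns of a generator matrix of D. -/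
/-!
Write `C` as the row space of `G`. The generator matrices of the `r`-dimensional subcodes of `C`
are exactly the products `A * G` with `A` an `r × k` matrix of full row rank, and the `F_q`-span
of the columns of `A * G` is the image of `X` under `v ↦ A *ᵥ v`. Rank–nullity for this
`F_q`-linear map on `X` gives `dim S_q(A * G) + dim (X ∩ ker A) = n`, and as `A` runs over
full-rank matrices, `ker A` runs over all `F_{q^m}`-subspaces of codimension `r`. Minimising the
first summand is therefore the same as maximising the second.
-/

open Matrix

/-- The `r`-th generalized rank weight of a linear rank metric code `C ⊆ (F_{q^m})^n`:
the minimum `F_q`-dimension of the q-support (the `F_q`-span of the columns of a generator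
matrix) over all `r`-dimensional `F_{q^m}`-subcodes `D` of `C`. -/
noncomputable def genRankWeight (Fq : Type*) {Fqm : Type*} [Field Fq] [Field Fqm]
    [Algebra Fq Fqm] {n : ℕ} (C : Submodule Fqm (Fin n → Fqm)) (r : ℕ) : ℕ :=
  sInf { w | ∃ b : Fin r → Fin n → Fqm, LinearIndependent Fqm b ∧
    Submodule.span Fqm (Set.range b) ≤ C ∧
    w = Module.finrank Fq
      (Submodule.span Fq (Set.range fun j : Fin n => fun i : Fin r => b i j)) }

theorem LinearMap.finrank_map_add_finrank_inf_ker {K M N : Type*} [DivisionRing K]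
    [AddCommGroup M] [Module K M] [AddCommGroup N] [Module K N] (f : M →ₗ[K] N)
    (p : Submodule K M) [FiniteDimensional K p] :
    Module.finrank K (p.map f) + Module.finrank K (p ⊓ LinearMap.ker f : Submodule K M) =
      Module.finrank K p := by
  have h := LinearMap.finrank_range_add_finrank_ker (f.domRestrict p)
  rwa [LinearMap.range_domRestrict, LinearMap.ker_domRestrict, ← Submodule.finrank_map_subtype_eq,
    Submodule.map_comap_subtype] at h

namespace Matrix

variable {K : Type*} [Field K] {ι κ ν : Type*}

theorem surjective_mulVecLin_iff_linearIndependent_row [Fintype ι] [Fintype κ]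
    (A : Matrix ι κ K) :
    Function.Surjective A.mulVecLin ↔ LinearIndependent K A.row := by
  rw [linearIndependent_iff_card_eq_finrank_span, Set.finrank, ← rank_eq_finrank_span_row, rank,
    ← LinearMap.range_eq_top, ← Module.finrank_fintype_fun_eq_card K]
  exact ⟨fun h => by rw [h, finrank_top], fun h => Submodule.eq_top_of_finrank_eq h.symm⟩

theorem linearIndependent_row_mul_iff {R : Type*} [CommRing R] [Fintype κ] {A : Matrix ι κ R}
    {G : Matrix κ ν R} (hG : LinearIndependent R G.row) :
    LinearIndependent R (A * G).row ↔ LinearIndependent R A.row := by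
  rw [← vecMul_injective_iff] at hG
  exact G.vecMulLinear.linearIndependent_iff (LinearMap.ker_eq_bot.mpr hG)

theorem span_row_le_span_row_iff {R : Type*} [CommSemiring R] [Fintype κ] {B : Matrix ι ν R}
    {G : Matrix κ ν R} :
    Submodule.span R (Set.range B.row) ≤ Submodule.span R (Set.range G.row) ↔
      ∃ A : Matrix ι κ R, A * G = B := by
  simp only [Submodule.span_le, Set.range_subset_iff, SetLike.mem_coe,
    Submodule.mem_span_range_iff_exists_fun, row_def, ← vecMul_eq_sum]
  constructor
  · intro h
    choose A hA using h
    exact ⟨of A, funext hA⟩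
  · rintro ⟨A, rfl⟩ i
    exact ⟨A i, rfl⟩

theorem finrank_ker_mulVecLin_add_card [Fintype ι] [Fintype κ] {A : Matrix ι κ K}
    (hA : LinearIndependent K A.row) :
    Module.finrank K (LinearMap.ker A.mulVecLin) + Fintype.card ι = Fintype.card κ := by
  have h := A.mulVecLin.finrank_range_add_finrank_ker
  rw [LinearMap.range_eq_top.mpr ((surjective_mulVecLin_iff_linearIndependent_row A).mpr hA),
    finrank_top, Module.finrank_fintype_fun_eq_card, Module.finrank_fintype_fun_eq_card] at h
  omega

theorem exists_linearIndependent_row_ker_mulVecLin_eq [Fintype ι] [Fintype κ] [DecidableEq κ]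
    (W : Submodule K (κ → K)) (hW : Module.finrank K W + Fintype.card ι = Fintype.card κ) :
    ∃ A : Matrix ι κ K, LinearIndependent K A.row ∧ LinearMap.ker A.mulVecLin = W := by
  have hquot : Module.finrank K ((κ → K) ⧸ W) = Module.finrank K (ι → K) := by
    have h := W.finrank_quotient_add_finrank
    rw [Module.finrank_fintype_fun_eq_card] at h ⊢
    omega
  obtain ⟨e⟩ := FiniteDimensional.nonempty_linearEquiv_of_finrank_eq hquot
  set f := e.toLinearMap ∘ₗ W.mkQ
  have hf : (LinearMap.toMatrix' f).mulVecLin = f := by rw [← toLin'_apply', toLin'_toMatrix']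
  refine ⟨LinearMap.toMatrix' f, ?_, ?_⟩
  · rw [← surjective_mulVecLin_iff_linearIndependent_row, hf]
    exact e.surjective.comp W.mkQ_surjective
  · rw [hf, LinearMap.ker_comp, e.ker, Submodule.comap_bot, W.ker_mkQ]

end Matrix

section qSupport

variable (K : Type*) {L ι κ ν : Type*} [Field K] [Field L] [Algebra K L]

def qSupport (A : Matrix ι κ L) : Submodule K (ι → L) :=
  Submodule.span K (Set.range A.col)

variable {K}

theorem qSupport_mul [Fintype κ] (A : Matrix ι κ L) (G : Matrix κ ν L) :
    qSupport K (A * G) = (qSupport K G).map (A.mulVecLin.restrictScalars K) := by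
  rw [qSupport, qSupport, Submodule.map_span, ← Set.range_comp]
  rfl

theorem finrank_qSupport_mul_add_finrank_inf_ker [Fintype κ] [Fintype ν] (A : Matrix ι κ L)
    {G : Matrix κ ν L} (hG : LinearIndependent K G.col) :
    Module.finrank K (qSupport K (A * G)) +
        Module.finrank K (qSupport K G ⊓ (LinearMap.ker A.mulVecLin).restrictScalars K :
          Submodule K (κ → L)) = Fintype.card ν := by
  have : FiniteDimensional K (qSupport K G) :=
    FiniteDimensional.span_of_finite K (Set.finite_range _)
  rw [qSupport_mul, ← finrank_span_eq_card hG]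
  exact (A.mulVecLin.restrictScalars K).finrank_map_add_finrank_inf_ker _

theorem exists_codim_subspace_of_span_row_le [Fintype ι] [Fintype κ] [Fintype ν]
    {G : Matrix κ ν L} (hG : LinearIndependent L G.row) (hGK : LinearIndependent K G.col)
    {B : Matrix ι ν L} (hB : LinearIndependent L B.row)
    (hBG : Submodule.span L (Set.range B.row) ≤ Submodule.span L (Set.range G.row)) :
    ∃ W : Submodule L (κ → L), Module.finrank L W + Fintype.card ι = Fintype.card κ ∧
      Module.finrank K (qSupport K B) +
        Module.finrank K (qSupport K G ⊓ W.restrictScalars K : Submodule K (κ → L)) =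
          Fintype.card ν := by
  obtain ⟨A, rfl⟩ := span_row_le_span_row_iff.mp hBG
  exact ⟨_, finrank_ker_mulVecLin_add_card ((linearIndependent_row_mul_iff hG).mp hB),
    finrank_qSupport_mul_add_finrank_inf_ker A hGK⟩

theorem exists_span_row_le_of_codim_subspace [Fintype ι] [Fintype κ] [Fintype ν] [DecidableEq κ]
    {G : Matrix κ ν L} (hG : LinearIndependent L G.row) (hGK : LinearIndependent K G.col)
    (W : Submodule L (κ → L)) (hW : Module.finrank L W + Fintype.card ι = Fintype.card κ) :
    ∃ B : Matrix ι ν L, LinearIndependent L B.row ∧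
      Submodule.span L (Set.range B.row) ≤ Submodule.span L (Set.range G.row) ∧
      Module.finrank K (qSupport K B) +
        Module.finrank K (qSupport K G ⊓ W.restrictScalars K : Submodule K (κ → L)) =
          Fintype.card ν := by
  obtain ⟨A, hA, rfl⟩ := exists_linearIndependent_row_ker_mulVecLin_eq W hW
  exact ⟨A * G, (linearIndependent_row_mul_iff hG).mpr hA,
    span_row_le_span_row_iff.mpr ⟨A, rfl⟩, finrank_qSupport_mul_add_finrank_inf_ker A hGK⟩

end qSupport

theorem Nat.sInf_le_and_sub_sInf_eq_sSup {S T : Set ℕ} {n : ℕ} (hT : T.Nonempty)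
    (hTS : ∀ t ∈ T, ∃ s ∈ S, t + s = n) (hST : ∀ s ∈ S, ∃ t ∈ T, t + s = n) :
    sInf T ≤ n ∧ n - sInf T = sSup S := by
  have hSbdd : BddAbove S := ⟨n, fun s hs => by obtain ⟨t, -, rfl⟩ := hST s hs; omega⟩
  obtain ⟨s₀, hs₀, hs₀n⟩ := hTS _ (Nat.sInf_mem hT)
  obtain ⟨t₀, ht₀, ht₀n⟩ := hST _ (Nat.sSup_mem ⟨s₀, hs₀⟩ hSbdd)
  have := Nat.sInf_le ht₀
  have := le_csSup hSbdd hs₀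
  omega

theorem genRankWeight_eq_qSystem_weight_general
    {Fq Fqm : Type*} [Field Fq] [Field Fqm] [Algebra Fq Fqm]
    {n k : ℕ} (C : Submodule Fqm (Fin n → Fqm))
    (G : Fin k → Fin n → Fqm) (hGind : LinearIndependent Fqm G)
    (hGspan : Submodule.span Fqm (Set.range G) = C)
    (hnd : LinearIndependent Fq (fun j : Fin n => fun i : Fin k => G i j))
    (X : Submodule Fq (Fin k → Fqm))
    (hXG : X = Submodule.span Fq (Set.range fun j : Fin n => fun i : Fin k => G i j))
    (r : ℕ) (hrk : r ≤ k) :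
    genRankWeight Fq C r ≤ n ∧
    n - genRankWeight Fq C r =
      sSup { w | ∃ W : Submodule Fqm (Fin k → Fqm), Module.finrank Fqm W = k - r ∧
        w = Module.finrank Fq (X ⊓ Submodule.restrictScalars Fq W : Submodule Fq (Fin k → Fqm)) } := by
  have hX : X = qSupport Fq (G : Matrix (Fin k) (Fin n) Fqm) := hXG
  subst hGspan hX
  apply Nat.sInf_le_and_sub_sInf_eq_sSup
  · exact ⟨_, G ∘ Fin.castLE hrk, hGind.comp _ (Fin.castLE_injective hrk),
      Submodule.span_mono (Set.range_comp_subset_range _ _), rfl⟩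
  · rintro _ ⟨B, hB, hBC, rfl⟩
    obtain ⟨W, hW, hsum⟩ := exists_codim_subspace_of_span_row_le hGind hnd hB hBC
    simp only [Fintype.card_fin] at hW hsum
    exact ⟨_, ⟨W, by omega, rfl⟩, hsum⟩
  · rintro _ ⟨W, hW, rfl⟩
    obtain ⟨B, hB, hBC, hsum⟩ :=
      exists_span_row_le_of_codim_subspace (ι := Fin r) hGind hnd W
        (by simp only [Fintype.card_fin]; omega)
    simp only [Fintype.card_fin] at hsum
    exact ⟨_, ⟨B, hB, hBC, rfl⟩, hsum⟩

/-- For a non-degenerate `[n,k]` linear rank metric code `C` with generator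
matrix `G` and associated q-system `X` (the `F_q`-span of the columns of `G`), the geometric
definition `n − d_r(X) = max{dim_{F_q}(X ∩ Π) : Π of codimension r}` agrees with
`d_r(C) = min{dim_{F_q} S_q(D) : D ≤ C, dim D = r}`. -/
theorem genRankWeight_eq_qSystem_weight
    {Fq Fqm : Type*} [Field Fq] [Field Fqm] [Algebra Fq Fqm]
    {n k : ℕ} (C : Submodule Fqm (Fin n → Fqm)) (hCk : Module.finrank Fqm C = k)
    (G : Fin k → Fin n → Fqm) (hGind : LinearIndependent Fqm G)
    (hGspan : Submodule.span Fqm (Set.range G) = C)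
    (hnd : LinearIndependent Fq (fun j : Fin n => fun i : Fin k => G i j))
    (X : Submodule Fq (Fin k → Fqm))
    (hXG : X = Submodule.span Fq (Set.range fun j : Fin n => fun i : Fin k => G i j))
    (r : ℕ) (hr1 : 1 ≤ r) (hrk : r ≤ k) :
    genRankWeight Fq C r ≤ n ∧
    n - genRankWeight Fq C r =
      sSup { w | ∃ W : Submodule Fqm (Fin k → Fqm), Module.finrank Fqm W = k - r ∧
        w = Module.finrank Fq (X ⊓ Submodule.restrictScalars Fq W : Submodule Fq (Fin k → Fqm)) } :=
  genRankWeight_eq_qSystem_weight_general C G hGind hGspan hnd X hXG r hrk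
end

section
/- Let C be an [n,k] non-degenerate linear rank metric code over F_{q^m} with parity check matrix H. Then for 1 ≤ r ≤ k, d_r(C) = min{ i : 1 ≤ i ≤ n, there exists M ∈ F_q^{n×i} with rank(M) = i and i − r ≥ rank(H·M) }, where d_r(C) = min{ dim_{F_q} S_q(D) : D ≤ C, dim_{F_{q^m}} D = r }. -/
/-!
A basis `b` of an `r`-dimensional subcode is stored as the columns of an `n × r` matrix `X`
over `Fqm`; the support `S_q` is then the `Fq`-span of the rows of `X`, and `X` spans a subcode
iff `H * X = 0`. Writing the rows of `X` in an `Fq`-basis of that span factors `X = M * Y`, with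
`M` an `n × d` matrix over `Fq` of rank `d = dim S_q`; the `r` independent columns of `Y` lie in
the kernel of `H * M`, so `rank (H * M) + r ≤ d`. Conversely, for such an `M` with
`rank (H * M) + r ≤ i`, any `r` independent kernel vectors of `H * M` form a `Y`, and `X = M * Y`
spans an `r`-dimensional subcode (`M` stays injective over `Fqm`, since `Fq`-independent vectors
remain `Fqm`-independent) whose rows lie in the `i`-dimensional `Fq`-span of the rows of `Y`.
-/

open Matrix

/-- Non-degenerate: the columns of a generator matrix are `F_q`-linearly independent;
equivalently, no nonzero `F_q`-linear combination of coordinates vanishes on all of `C`. -/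
def Nondeg (Fq : Type*) {Fqm : Type*} [Field Fq] [Field Fqm] [Algebra Fq Fqm] {n : ℕ}
    (C : Submodule Fqm (Fin n → Fqm)) : Prop :=
  ∀ c : Fin n → Fq, (∀ x ∈ C, ∑ j, algebraMap Fq Fqm (c j) * x j = 0) → c = 0

namespace Matrix

variable {K L : Type*} [Field K] [Field L] [Algebra K L]

theorem col_mul {l m n R : Type*} [Fintype m] [NonUnitalNonAssocSemiring R]
    (A : Matrix l m R) (B : Matrix m n R) (j : n) : (A * B).col j = A *ᵥ B.col j :=
  rfl

theorem linearIndependent_col_map_algebraMap {m n : Type*} [Fintype m] [Fintype n]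
    {M : Matrix m n K} (hM : M.rank = Fintype.card n) :
    LinearIndependent L (M.map (algebraMap K L)).col := by
  have hcol : LinearIndependent K M.col := by
    rw [linearIndependent_iff_card_eq_finrank_span, Set.finrank, ← rank_eq_finrank_span_cols, hM]
  exact linearIndependent_algebraMap_comp_iff.mpr hcol

theorem exists_map_mul_eq_of_finrank_span_row {m ι : Type*} [Fintype m] {d : ℕ}
    (X : Matrix m ι L)
    (hd : Module.finrank K (Submodule.span K (Set.range X.row)) = d) :
    ∃ (M : Matrix m (Fin d) K) (Y : Matrix (Fin d) ι L),
      M.rank = d ∧ M.map (algebraMap K L) * Y = X := by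
  set P := Submodule.span K (Set.range X.row)
  have : FiniteDimensional K P := FiniteDimensional.span_of_finite K (Set.finite_range _)
  let e : Module.Basis (Fin d) K P := Module.finBasisOfFinrankEq K P hd
  let x : m → P := fun j => ⟨X.row j, Submodule.subset_span ⟨j, rfl⟩⟩
  refine ⟨Matrix.of fun j => e.equivFun (x j), Matrix.of fun s => (e s : ι → L), ?_, ?_⟩
  · have hx : Submodule.span K (Set.range x) = ⊤ := by
      convert Submodule.span_span_coe_preimage (R := K) (s := Set.range X.row)
      ext ⟨v, hv⟩
      simp [x, Subtype.ext_iff]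
    rw [rank_eq_finrank_span_row]
    change Module.finrank K
      (Submodule.span K (Set.range ((e.equivFun : P →ₗ[K] Fin d → K) ∘ x))) = d
    rw [Set.range_comp, Submodule.span_image, hx, Submodule.map_top, LinearEquiv.range,
      finrank_top, Module.finrank_fin_fun]
  · ext j t
    have h := congr_fun (congrArg Subtype.val (e.sum_equivFun (x j))) t
    simp only [Submodule.coe_sum, Finset.sum_apply, Submodule.coe_smul,
      Algebra.smul_def] at h
    simp only [mul_apply, map_apply, of_apply]
    exact h

theorem finrank_span_row_map_mul_le {m o ι : Type*} [Fintype o]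
    (M : Matrix m o K) (Y : Matrix o ι L) :
    Module.finrank K (Submodule.span K (Set.range (M.map (algebraMap K L) * Y).row)) ≤
      Fintype.card o := by
  have hrow (j : m) : (M.map (algebraMap K L) * Y).row j = ∑ s, M j s • Y.row s := by
    ext t; simp [mul_apply, Finset.sum_apply, Algebra.smul_def]
  have hle : Submodule.span K (Set.range (M.map (algebraMap K L) * Y).row) ≤
      Submodule.span K (Set.range Y.row) := by
    rw [Submodule.span_le]
    rintro _ ⟨j, rfl⟩
    rw [hrow]
    exact Submodule.sum_mem _ fun s _ => Submodule.smul_mem _ _ (Submodule.subset_span ⟨s, rfl⟩)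
  have : FiniteDimensional K (Submodule.span K (Set.range Y.row)) :=
    FiniteDimensional.span_of_finite K (Set.finite_range _)
  exact (Submodule.finrank_mono hle).trans (finrank_range_le_card _)

theorem rank_add_card_le_of_mul_eq_zero {F m o n : Type*} [Field F] [Finite m] [Fintype o]
    [Fintype n] {A : Matrix m o F} {Y : Matrix o n F} (hY : LinearIndependent F Y.col)
    (hAY : A * Y = 0) : A.rank + Fintype.card n ≤ Fintype.card o := by
  have hrank : Y.rank = Fintype.card n := by
    rw [← rank_transpose]; exact hY.rank_matrix
  simpa [hrank] using rank_add_rank_le_card_of_mul_eq_zero hAY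

theorem exists_linearIndependent_col_mul_eq_zero {F m o : Type*} [Field F] [Fintype o]
    {A : Matrix m o F} {r : ℕ} (h : A.rank + r ≤ Fintype.card o) :
    ∃ Y : Matrix o (Fin r) F, LinearIndependent F Y.col ∧ A * Y = 0 := by
  have hr : r ≤ Module.finrank F (LinearMap.ker A.mulVecLin) := by
    have := LinearMap.finrank_range_add_finrank_ker A.mulVecLin
    simp only [Module.finrank_fintype_fun_eq_card] at this
    rw [rank] at h
    omega
  set N := LinearMap.ker A.mulVecLin
  let z : Fin r → N := fun t => Module.finBasis F N (Fin.castLE hr t)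
  refine ⟨(Matrix.of fun t => (z t : o → F))ᵀ, ?_, ?_⟩
  · exact ((Module.finBasis F N).linearIndependent.comp _ (Fin.castLE_injective hr)).map'
      N.subtype N.ker_subtype
  · ext i t
    exact congr_fun (z t).2 i

theorem span_col_le_iff_mul_eq_zero {n p ι : Type*} [Fintype n] {C : Submodule L (n → L)}
    {H : Matrix p n L} (hH : ∀ x, x ∈ C ↔ H *ᵥ x = 0) (X : Matrix n ι L) :
    Submodule.span L (Set.range X.col) ≤ C ↔ H * X = 0 := by
  simp only [Submodule.span_le, Set.range_subset_iff, SetLike.mem_coe, hH, ← col_mul]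
  exact ⟨fun h => ext fun i t => congr_fun (h t) i, fun h t => by rw [h]; rfl⟩

theorem exists_map_mul_rank_add_le_of_mul_eq_zero {m p : Type*} [Fintype m] [Finite p] {r d : ℕ}
    (H : Matrix p m L) {X : Matrix m (Fin r) L} (hX : LinearIndependent L X.col)
    (hHX : H * X = 0) (hd : Module.finrank K (Submodule.span K (Set.range X.row)) = d) :
    ∃ M : Matrix m (Fin d) K, M.rank = d ∧ (H * M.map (algebraMap K L)).rank + r ≤ d := by
  obtain ⟨M, Y, hM, rfl⟩ := exists_map_mul_eq_of_finrank_span_row X hd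
  have hY : LinearIndependent L Y.col :=
    LinearIndependent.of_comp (M.map (algebraMap K L)).mulVecLin hX
  refine ⟨M, hM, ?_⟩
  simpa using rank_add_card_le_of_mul_eq_zero hY (by rwa [Matrix.mul_assoc])

theorem exists_mul_eq_zero_of_map_mul_rank_add_le {m p : Type*} [Fintype m] {r i : ℕ}
    (H : Matrix p m L) {M : Matrix m (Fin i) K} (hM : M.rank = i)
    (h : (H * M.map (algebraMap K L)).rank + r ≤ i) :
    ∃ X : Matrix m (Fin r) L, LinearIndependent L X.col ∧ H * X = 0 ∧
      Module.finrank K (Submodule.span K (Set.range X.row)) ≤ i := by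
  obtain ⟨Y, hY, hHMY⟩ :=
    exists_linearIndependent_col_mul_eq_zero (h.trans_eq (Fintype.card_fin i).symm)
  have hMinj : LinearMap.ker (M.map (algebraMap K L)).mulVecLin = ⊥ :=
    LinearMap.ker_eq_bot.mpr <| mulVec_injective_iff.mpr <|
      linearIndependent_col_map_algebraMap (hM.trans (Fintype.card_fin i).symm)
  refine ⟨M.map (algebraMap K L) * Y, hY.map' _ hMinj, by rwa [← Matrix.mul_assoc], ?_⟩
  simpa using finrank_span_row_map_mul_le M Y

end Matrix

theorem genRankWeight_eq_parityCheck_min_general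
    {Fq Fqm : Type*} [Field Fq] [Field Fqm] [Algebra Fq Fqm]
    {n k : ℕ} (C : Submodule Fqm (Fin n → Fqm))
    (H : Matrix (Fin (n - k)) (Fin n) Fqm)
    (hH : ∀ x, x ∈ C ↔ H.mulVec x = 0)
    (r : ℕ) (hr1 : 1 ≤ r) :
    genRankWeight Fq C r =
      sInf { i | 1 ≤ i ∧ i ≤ n ∧ ∃ M : Matrix (Fin n) (Fin i) Fq,
        M.rank = i ∧ (H * M.map (algebraMap Fq Fqm)).rank + r ≤ i } := by
  refine csInf_eq_csInf_of_forall_exists_le ?_ ?_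
  · rintro _ ⟨b, hb, hbC, rfl⟩
    obtain ⟨M, hM, hle⟩ := exists_map_mul_rank_add_le_of_mul_eq_zero (K := Fq) H
      (X := (of b)ᵀ) hb ((span_col_le_iff_mul_eq_zero hH _).1 hbC) rfl
    exact ⟨_, ⟨by omega, hM ▸ M.rank_le_height, M, hM, hle⟩, le_rfl⟩
  · rintro i ⟨-, -, M, hM, hle⟩
    obtain ⟨X, hX, hHX, hXi⟩ := exists_mul_eq_zero_of_map_mul_rank_add_le H hM hle
    exact ⟨_, ⟨X.col, hX, (span_col_le_iff_mul_eq_zero hH X).2 hHX, rfl⟩, hXi⟩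

/-- For a non-degenerate `[n,k]` linear rank metric code `C` with parity check
matrix `H`, the `r`-th generalized rank weight equals
`min{ i : 1 ≤ i ≤ n, ∃ M ∈ F_q^{n×i}, rank M = i, i − r ≥ rank(H·M) }`. -/
theorem genRankWeight_eq_parityCheck_min
    {Fq Fqm : Type*} [Field Fq] [Field Fqm] [Algebra Fq Fqm]
    {n k : ℕ} (C : Submodule Fqm (Fin n → Fqm)) (hCk : Module.finrank Fqm C = k)
    (hnd : Nondeg Fq C)
    (H : Matrix (Fin (n - k)) (Fin n) Fqm)
    (hH : ∀ x, x ∈ C ↔ H.mulVec x = 0)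
    (r : ℕ) (hr1 : 1 ≤ r) (hrk : r ≤ k) :
    genRankWeight Fq C r =
      sInf { i | 1 ≤ i ∧ i ≤ n ∧ ∃ M : Matrix (Fin n) (Fin i) Fq,
        M.rank = i ∧ (H * M.map (algebraMap Fq Fqm)).rank + r ≤ i } :=
  genRankWeight_eq_parityCheck_min_general C H hH r hr1
end

section
/- Monotonicity of generalized rank weights: For an [n,k] non-degenerate linear rank metric code C over F_{q^m} with generalized rank weights d_r(C) = min{dim_{F_q} S_q(D) : D ≤ C, dim D = r}, one has 0 < d_1(C) < d_2(C) < ... < d_k(C) = n. -/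
open Matrix

/-!
For a family `b` spanning a subcode `D`, rank–nullity for `c ↦ ∑ⱼ cⱼ b_{·j}` on `F_q^n` shows that
the rank weight of `b` is `n` minus the `F_q`-dimension of the `F_q`-rational part of `D⊥`, so it
depends on `D` only. Given an optimal `(r+1)`-dimensional `D`, pick `c ∈ F_q^n` not orthogonal to
`D`: then `D ∩ c⊥` is `r`-dimensional and its rational dual strictly contains that of `D`, whence
`d_r < d_{r+1}`. For `r = k` the subcode is `C` itself, whose rational dual is trivial by
non-degeneracy.
-/

section SubfieldAnnihilator

variable (Fq : Type*) {Fqm ι : Type*} [Field Fq] [Field Fqm] [Algebra Fq Fqm] [Fintype ι]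

noncomputable def dotForm : (ι → Fq) →ₗ[Fq] Module.Dual Fqm (ι → Fqm) :=
  LinearMap.mk₂' Fq Fqm (fun c x => ∑ j, algebraMap Fq Fqm (c j) * x j)
    (fun c c' x => by simp only [Pi.add_apply, map_add, add_mul, Finset.sum_add_distrib])
    (fun a c x => by
      simp only [Pi.smul_apply, Algebra.smul_def, map_mul, Algebra.algebraMap_self,
        RingHom.id_apply, mul_assoc, Finset.mul_sum])
    (fun c x x' => by simp only [Pi.add_apply, mul_add, Finset.sum_add_distrib])
    (fun a c x => by simp only [Pi.smul_apply, smul_eq_mul, Finset.mul_sum, mul_left_comm])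

@[simp]
lemma dotForm_apply (c : ι → Fq) (x : ι → Fqm) :
    dotForm Fq c x = ∑ j, algebraMap Fq Fqm (c j) * x j := rfl

/-- The `Fq`-rational vectors of the dual of `D`, i.e. the subfield subcode of `D⊥`. -/
noncomputable def subfieldAnnihilator (D : Submodule Fqm (ι → Fqm)) : Submodule Fq (ι → Fq) :=
  (D.dualAnnihilator.restrictScalars Fq).comap (dotForm Fq)

variable {Fq}

lemma mem_subfieldAnnihilator {D : Submodule Fqm (ι → Fqm)} {c : ι → Fq} :
    c ∈ subfieldAnnihilator Fq D ↔ D ≤ LinearMap.ker (dotForm Fq c) :=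
  Submodule.mem_dualAnnihilator _

lemma subfieldAnnihilator_anti {D₁ D₂ : Submodule Fqm (ι → Fqm)} (h : D₁ ≤ D₂) :
    subfieldAnnihilator Fq D₂ ≤ subfieldAnnihilator Fq D₁ := fun _ hc =>
  mem_subfieldAnnihilator.2 (h.trans (mem_subfieldAnnihilator.1 hc))

lemma subfieldAnnihilator_ne_top {D : Submodule Fqm (ι → Fqm)} (hD : D ≠ ⊥) :
    subfieldAnnihilator Fq D ≠ ⊤ := by
  classical
  obtain ⟨x, hxD, hx⟩ := Submodule.exists_mem_ne_zero_of_ne_bot hD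
  obtain ⟨j, hj⟩ := Function.ne_iff.1 hx
  intro htop
  have hsingle := mem_subfieldAnnihilator.1 (htop ▸ Submodule.mem_top (x := Pi.single j 1)) hxD
  exact hj (by simpa [Pi.single_apply] using hsingle)

lemma finrank_subfieldAnnihilator_le (D : Submodule Fqm (ι → Fqm)) :
    Module.finrank Fq (subfieldAnnihilator Fq D) ≤ Fintype.card ι :=
  (Submodule.finrank_le _).trans_eq (Module.finrank_fintype_fun_eq_card Fq)

lemma finrank_subfieldAnnihilator_lt {D : Submodule Fqm (ι → Fqm)} (hD : D ≠ ⊥) :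
    Module.finrank Fq (subfieldAnnihilator Fq D) < Fintype.card ι := by
  simpa using Submodule.finrank_lt (subfieldAnnihilator_ne_top (Fq := Fq) hD)

lemma ker_linearCombination_columns {κ : Type*} (b : κ → ι → Fqm) :
    LinearMap.ker (Fintype.linearCombination Fq fun j i => b i j) =
      subfieldAnnihilator Fq (Submodule.span Fqm (Set.range b)) := by
  ext c
  rw [LinearMap.mem_ker, Fintype.linearCombination_apply, mem_subfieldAnnihilator,
    Submodule.span_le, Set.range_subset_iff, funext_iff]
  simp [Algebra.smul_def]

lemma finrank_span_columns_add_finrank_subfieldAnnihilator {κ : Type*} (b : κ → ι → Fqm) :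
    Module.finrank Fq (Submodule.span Fq (Set.range fun j i => b i j)) +
      Module.finrank Fq (subfieldAnnihilator Fq (Submodule.span Fqm (Set.range b))) =
      Fintype.card ι := by
  rw [← Fintype.range_linearCombination, ← ker_linearCombination_columns,
    LinearMap.finrank_range_add_finrank_ker, Module.finrank_fintype_fun_eq_card]

lemma exists_lt_subfieldAnnihilator {D : Submodule Fqm (ι → Fqm)} (hD : D ≠ ⊥) :
    ∃ D' ≤ D, Module.finrank Fqm D' + 1 = Module.finrank Fqm D ∧
      subfieldAnnihilator Fq D < subfieldAnnihilator Fq D' := by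
  obtain ⟨c, -, hc⟩ := SetLike.exists_of_lt (subfieldAnnihilator_ne_top (Fq := Fq) hD).lt_top
  let f : Module.Dual Fqm D := (dotForm Fq c).domRestrict D
  have hf : f ≠ 0 := fun hf => hc <| mem_subfieldAnnihilator.2 fun x hx =>
    LinearMap.congr_fun hf ⟨x, hx⟩
  refine ⟨(LinearMap.ker f).map D.subtype, Submodule.map_subtype_le _ _, ?_, ?_⟩
  · rw [Submodule.finrank_map_subtype_eq, Module.Dual.finrank_ker_add_one_of_ne_zero hf]
  · refine SetLike.lt_iff_le_and_exists.2
      ⟨subfieldAnnihilator_anti (Submodule.map_subtype_le _ _), c, ?_, hc⟩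
    rw [mem_subfieldAnnihilator, Submodule.map_le_iff_le_comap]
    exact fun x hx => hx

end SubfieldAnnihilator

lemma Submodule.exists_le_finrank_eq {K V : Type*} [DivisionRing K] [AddCommGroup V] [Module K V]
    (C : Submodule K V) {r : ℕ} (hr : r ≤ Module.finrank K C) :
    ∃ D ≤ C, Module.finrank K D = r := by
  obtain ⟨f, hf⟩ := exists_linearIndependent_of_le_finrank hr
  refine ⟨Submodule.span K (Set.range (C.subtype ∘ f)), ?_, ?_⟩
  · rw [Submodule.span_le, Set.range_subset_iff]
    exact fun i => (f i).2
  · rw [finrank_span_eq_card (hf.map' C.subtype C.ker_subtype), Fintype.card_fin]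

section GenRankWeight

variable {Fq Fqm : Type*} [Field Fq] [Field Fqm] [Algebra Fq Fqm] {n : ℕ}

lemma genRankWeight_eq_sInf (C : Submodule Fqm (Fin n → Fqm)) (r : ℕ) :
    genRankWeight Fq C r = sInf ((fun D => n - Module.finrank Fq (subfieldAnnihilator Fq D)) ''
      {D | D ≤ C ∧ Module.finrank Fqm D = r}) := by
  rw [genRankWeight]
  congr 1
  ext w
  constructor
  · rintro ⟨b, hb, hbC, rfl⟩
    refine ⟨_, ⟨hbC, by rw [finrank_span_eq_card hb, Fintype.card_fin]⟩, ?_⟩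
    have := finrank_span_columns_add_finrank_subfieldAnnihilator (Fq := Fq) b
    rw [Fintype.card_fin] at this
    dsimp only
    omega
  · rintro ⟨D, ⟨hDC, rfl⟩, rfl⟩
    let e := Module.finBasis Fqm D
    have hspan : Submodule.span Fqm (Set.range (D.subtype ∘ e)) = D := by
      rw [Set.range_comp, Submodule.span_image, e.span_eq, Submodule.map_top,
        Submodule.range_subtype]
    refine ⟨D.subtype ∘ e, e.linearIndependent.map' D.subtype D.ker_subtype,
      hspan.le.trans hDC, ?_⟩
    have := finrank_span_columns_add_finrank_subfieldAnnihilator (Fq := Fq) (D.subtype ∘ e)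
    rw [hspan, Fintype.card_fin] at this
    dsimp only
    omega

variable {C : Submodule Fqm (Fin n → Fqm)} {r : ℕ}

lemma genRankWeight_le {D : Submodule Fqm (Fin n → Fqm)} (hDC : D ≤ C)
    (hD : Module.finrank Fqm D = r) :
    genRankWeight Fq C r ≤ n - Module.finrank Fq (subfieldAnnihilator Fq D) := by
  rw [genRankWeight_eq_sInf]
  exact Nat.sInf_le ⟨D, ⟨hDC, hD⟩, rfl⟩

lemma exists_genRankWeight_eq (hr : r ≤ Module.finrank Fqm C) :
    ∃ D ≤ C, Module.finrank Fqm D = r ∧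
      genRankWeight Fq C r = n - Module.finrank Fq (subfieldAnnihilator Fq D) := by
  have hne : {D | D ≤ C ∧ Module.finrank Fqm D = r}.Nonempty := C.exists_le_finrank_eq hr
  rw [genRankWeight_eq_sInf]
  obtain ⟨D', ⟨hD'C, hD'⟩, hw⟩ := Nat.sInf_mem (hne.image _)
  exact ⟨D', hD'C, hD', hw.symm⟩

lemma nondeg_iff_subfieldAnnihilator_eq_bot :
    Nondeg Fq C ↔ subfieldAnnihilator Fq C = ⊥ := by
  simp only [eq_bot_iff, SetLike.le_def, Submodule.mem_bot, mem_subfieldAnnihilator]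
  rfl

end GenRankWeight

/-- Monotonicity of generalized rank weights:
`0 < d_1(C) < d_2(C) < ⋯ < d_k(C) = n`. -/
theorem genRankWeight_strictMono
    {Fq Fqm : Type*} [Field Fq] [Field Fqm] [Algebra Fq Fqm]
    {n k : ℕ} (hk : 0 < k) (C : Submodule Fqm (Fin n → Fqm))
    (hCk : Module.finrank Fqm C = k) (hnd : Nondeg Fq C) :
    0 < genRankWeight Fq C 1 ∧
    (∀ r : ℕ, 1 ≤ r → r < k → genRankWeight Fq C r < genRankWeight Fq C (r + 1)) ∧
    genRankWeight Fq C k = n := by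
  have ne_bot {D : Submodule Fqm (Fin n → Fqm)} {r : ℕ} (hD : Module.finrank Fqm D = r + 1) :
      D ≠ ⊥ := by
    rintro rfl
    simp at hD
  refine ⟨?_, fun r _ hrk => ?_, ?_⟩
  · obtain ⟨D, -, hD, hw⟩ := exists_genRankWeight_eq (Fq := Fq) (hCk ▸ hk : 1 ≤ _)
    have hann := finrank_subfieldAnnihilator_lt (Fq := Fq) (ne_bot hD)
    rw [Fintype.card_fin] at hann
    omega
  · obtain ⟨D, hDC, hD, hw⟩ := exists_genRankWeight_eq (Fq := Fq) (hCk ▸ hrk : r + 1 ≤ _)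
    obtain ⟨D', hD'D, hD', hlt⟩ := exists_lt_subfieldAnnihilator (Fq := Fq) (ne_bot hD)
    have hle := genRankWeight_le (Fq := Fq) (hD'D.trans hDC) (r := r) (by omega)
    have hann := Submodule.finrank_lt_finrank_of_lt hlt
    have hann' := finrank_subfieldAnnihilator_le (Fq := Fq) D'
    rw [Fintype.card_fin] at hann'
    omega
  · obtain ⟨D, hDC, hD, hw⟩ := exists_genRankWeight_eq (Fq := Fq) hCk.ge
    rwa [Submodule.eq_of_le_of_finrank_eq hDC (hD.trans hCk.symm),
      nondeg_iff_subfieldAnnihilator_eq_bot.1 hnd, finrank_bot, Nat.sub_zero] at hw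
end

section
/- Generalized Singleton bound: For an [n,k] non-degenerate linear rank metric code C over F_{q^m} and 1 ≤ r ≤ k, the r-th generalized rank weight satisfies d_r(C) ≤ n − k + r. -/
open Matrix

/-!
Take an `r`-dimensional subcode of `C` whose codewords vanish on `k - r` prescribed coordinates;
it exists because imposing `k - r` linear conditions on the `k`-dimensional code `C` leaves a
subspace of dimension at least `r`. The `F_q`-span of its columns is spanned by the remaining
`n - k + r` columns.
-/

open Module Submodule

theorem finrank_span_range_le_card_of_eq_zero {K V ι : Type*} [DivisionRing K] [AddCommGroup V]
    [Module K V] (v : ι → V) (T : Finset ι) (hv : ∀ j ∉ T, v j = 0) :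
    finrank K (span K (Set.range v)) ≤ T.card := by
  classical
  have hle : span K (Set.range v) ≤ span K (T.image v : Set V) := by
    rw [span_le]
    rintro - ⟨j, rfl⟩
    by_cases hj : j ∈ T
    · exact subset_span (Finset.mem_coe.2 (Finset.mem_image_of_mem v hj))
    · rw [hv j hj]
      exact zero_mem _
  calc finrank K (span K (Set.range v))
      ≤ finrank K (span K (T.image v : Set V)) := finrank_mono hle
    _ ≤ (T.image v).card := finrank_span_finset_le_card _
    _ ≤ T.card := Finset.card_image_le

theorem Submodule.exists_linearIndependent_forall_eq_zero {K ι : Type*} [Field K] [Fintype ι]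
    (C : Submodule K (ι → K)) (S : Finset ι) {r : ℕ} (h : S.card + r ≤ finrank K C) :
    ∃ b : Fin r → ι → K, LinearIndependent K b ∧ (∀ i, b i ∈ C) ∧ ∀ i, ∀ j ∈ S, b i j = 0 := by
  let restrict : C →ₗ[K] (S → K) := (LinearMap.funLeft K K ((↑) : S → ι)).comp C.subtype
  have hker : r ≤ finrank K (LinearMap.ker restrict) := by
    have hrange : finrank K (LinearMap.range restrict) ≤ S.card := by
      have := (LinearMap.range restrict).finrank_le
      rwa [finrank_fintype_fun_eq_card, Fintype.card_coe] at this
    have := LinearMap.finrank_range_add_finrank_ker restrict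
    omega
  obtain ⟨b, hb⟩ := exists_linearIndependent_of_le_finrank hker
  have hinj : Function.Injective (C.subtype ∘ₗ (LinearMap.ker restrict).subtype) :=
    Subtype.val_injective.comp Subtype.val_injective
  refine ⟨_, hb.map_injOn _ hinj.injOn, fun i => (b i : C).2, fun i j hj => ?_⟩
  exact congrFun (LinearMap.mem_ker.1 (b i).2) ⟨j, hj⟩

theorem genRankWeight_le_finrank_span_columns {Fq Fqm : Type*} [Field Fq] [Field Fqm]
    [Algebra Fq Fqm] {n r : ℕ} (C : Submodule Fqm (Fin n → Fqm)) (b : Fin r → Fin n → Fqm)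
    (hb : LinearIndependent Fqm b) (hbC : ∀ i, b i ∈ C) :
    genRankWeight Fq C r ≤ finrank Fq (span Fq (Set.range fun j i => b i j)) :=
  Nat.sInf_le ⟨b, hb, span_le.2 (Set.range_subset_iff.2 hbC), rfl⟩

theorem genRankWeight_singleton_bound_general
    {Fq Fqm : Type*} [Field Fq] [Field Fqm] [Algebra Fq Fqm]
    {n k : ℕ} (C : Submodule Fqm (Fin n → Fqm))
    (hCk : Module.finrank Fqm C = k)
    (r : ℕ) (hrk : r ≤ k) :
    genRankWeight Fq C r ≤ n - k + r := by
  have hkn : k ≤ n := by simpa [hCk] using C.finrank_le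
  obtain ⟨S, -, hS⟩ := Finset.exists_subset_card_eq (s := (Finset.univ : Finset (Fin n)))
    (n := k - r) (by simp only [Finset.card_univ, Fintype.card_fin]; omega)
  obtain ⟨b, hb, hbC, hbS⟩ := C.exists_linearIndependent_forall_eq_zero S (r := r) (by omega)
  calc genRankWeight Fq C r
      ≤ finrank Fq (span Fq (Set.range fun j i => b i j)) :=
        genRankWeight_le_finrank_span_columns C b hb hbC
    _ ≤ Sᶜ.card := finrank_span_range_le_card_of_eq_zero _ _ fun j hj =>
        funext fun i => hbS i j (Finset.notMem_compl.1 hj)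
    _ = n - k + r := by simp only [Finset.card_compl, hS, Fintype.card_fin]; omega

/-- Generalized Singleton bound: for a non-degenerate `[n,k]` linear rank metric
code `C` over `F_{q^m}` and `1 ≤ r ≤ k`, `d_r(C) ≤ n − k + r`. -/
theorem genRankWeight_singleton_bound
    {Fq Fqm : Type*} [Field Fq] [Field Fqm] [Algebra Fq Fqm]
    {n k : ℕ} (C : Submodule Fqm (Fin n → Fqm))
    (hCk : Module.finrank Fqm C = k) (hnd : Nondeg Fq C)
    (r : ℕ) (hr1 : 1 ≤ r) (hrk : r ≤ k) :
    genRankWeight Fq C r ≤ n - k + r :=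
  genRankWeight_singleton_bound_general C hCk r hrk
end

section
/- Duality of generalized rank weights: Let C be an [n,k] non-degenerate linear rank metric code over F_{q^m} with non-degenerate dual C^⊥ of dimension n−k. Then {d_1(C),...,d_k(C)} ∪ {n+1−d_1(C^⊥),...,n+1−d_{n−k}(C^⊥)} = {1,2,...,n}. -/
open Matrix

/-!
For an `F_q`-subspace `V ≤ F_q^n` write `V_L` for its `L`-span in `L^n`, `L = F_{q^m}`. The
support of a subcode `D` is the smallest `V` with `D ≤ V_L`, so `d_r(C) ≤ w` iff `r ≤ N_C(w)`,
where `N_C(w)` is the largest `dim (C ⊓ V_L)` over `dim V ≤ w`. Hence the weights of `C` are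
exactly the points `w` where `N_C` jumps, `N_C(w - 1) < N_C(w)`. Extension of scalars commutes
with the dot-orthogonal, so `dim (C ⊓ V_L) + n = dim C + dim V + dim (C^⊥ ⊓ (V^⊥)_L)`, and
therefore `N_C(w) + n = k + w + N_{C^⊥}(n - w)`: `N_{C^⊥}` jumps at `n + 1 - w` exactly when
`N_C` does not jump at `w`.
-/

open Module Submodule

section Subspaces

variable {K E : Type*} [Field K] [AddCommGroup E] [Module K E]

theorem exists_linearIndependent_span_le
    {M : Submodule K E} {r : ℕ} (hr : r ≤ finrank K M) :
    ∃ b : Fin r → E, LinearIndependent K b ∧ span K (Set.range b) ≤ M := by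
  obtain ⟨b, hb⟩ := exists_linearIndependent_of_le_finrank hr
  refine ⟨fun i => b i, hb.map' M.subtype M.ker_subtype, span_le.mpr ?_⟩
  rintro _ ⟨i, rfl⟩
  exact (b i).2

theorem exists_le_finrank_eq
    {M : Submodule K E} {r : ℕ} (hr : r ≤ finrank K M) :
    ∃ N ≤ M, finrank K N = r := by
  obtain ⟨b, hb, hle⟩ := exists_linearIndependent_span_le hr
  exact ⟨_, hle, by rw [finrank_span_eq_card hb, Fintype.card_fin]⟩

end Subspaces

section DotOrthogonal

variable {K : Type*} [Field K] {n : ℕ}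

def dotOrth (W : Submodule K (Fin n → K)) : Submodule K (Fin n → K) :=
  LinearMap.BilinForm.orthogonal (dotProductBilin K K) W

theorem mem_dotOrth {W : Submodule K (Fin n → K)} {y : Fin n → K} :
    y ∈ dotOrth W ↔ ∀ x ∈ W, x ⬝ᵥ y = 0 := Iff.rfl

theorem nondegenerate_dotProductBilin :
    LinearMap.BilinForm.Nondegenerate (dotProductBilin K K : LinearMap.BilinForm K (Fin n → K)) :=
  ⟨fun _ hx => dotProduct_eq_zero_iff.mp hx,
    fun _ hy => dotProduct_eq_zero_iff.mp fun x => (dotProduct_comm _ _).trans (hy x)⟩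

theorem isRefl_dotProductBilin :
    LinearMap.BilinForm.IsRefl (dotProductBilin K K : LinearMap.BilinForm K (Fin n → K)) :=
  fun x y h => (dotProduct_comm y x).trans h

theorem finrank_dotOrth_add (W : Submodule K (Fin n → K)) :
    finrank K (dotOrth W) + finrank K W = n := by
  have h := LinearMap.BilinForm.finrank_orthogonal nondegenerate_dotProductBilin W
  have hW := W.finrank_le
  rw [finrank_fin_fun] at h hW
  rw [dotOrth, h]
  omega

theorem dotOrth_dotOrth (W : Submodule K (Fin n → K)) : dotOrth (dotOrth W) = W :=
  LinearMap.BilinForm.orthogonal_orthogonal nondegenerate_dotProductBilin isRefl_dotProductBilin W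

theorem dotOrth_le_dotOrth_iff {V W : Submodule K (Fin n → K)} :
    dotOrth V ≤ dotOrth W ↔ W ≤ V :=
  ⟨fun h => dotOrth_dotOrth W ▸ dotOrth_dotOrth V ▸ LinearMap.BilinForm.orthogonal_le h,
    LinearMap.BilinForm.orthogonal_le⟩

theorem dotOrth_sup (V W : Submodule K (Fin n → K)) :
    dotOrth (V ⊔ W) = dotOrth V ⊓ dotOrth W := by
  ext y
  simp only [mem_inf, mem_dotOrth]
  constructor
  · exact fun h => ⟨fun x hx => h x (mem_sup_left hx), fun x hx => h x (mem_sup_right hx)⟩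
  rintro ⟨hV, hW⟩ _ hx
  obtain ⟨v, hv, w, hw, rfl⟩ := mem_sup.mp hx
  rw [add_dotProduct, hV v hv, hW w hw, add_zero]

theorem finrank_inf_add_eq_add_finrank_dotOrth_inf (V W : Submodule K (Fin n → K)) :
    finrank K ↥(V ⊓ W) + n =
      finrank K V + finrank K W + finrank K ↥(dotOrth V ⊓ dotOrth W) := by
  have h := finrank_dotOrth_add (V ⊔ W)
  rw [dotOrth_sup] at h
  have := finrank_sup_add_finrank_inf_eq V W
  omega

theorem mem_dotOrth_span {S : Set (Fin n → K)} {y : Fin n → K} :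
    y ∈ dotOrth (span K S) ↔ ∀ x ∈ S, x ⬝ᵥ y = 0 :=
  ⟨fun h x hx => h x (subset_span hx),
    fun h _ hx => (span_le (p := LinearMap.ker ((dotProductBilin K K).flip y))).mpr h hx⟩

end DotOrthogonal

section ExtendCoeffs

variable {K L : Type*} [Field K] [Field L] [Algebra K L] {n : ℕ}

variable (L) in
def extendCoeffs (V : Submodule K (Fin n → K)) : Submodule L (Fin n → L) :=
  span L (V.map ((Algebra.linearMap K L).compLeft (Fin n)))

variable (K) in
def subfieldSubcode (M : Submodule L (Fin n → L)) : Submodule K (Fin n → K) :=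
  (M.restrictScalars K).comap ((Algebra.linearMap K L).compLeft (Fin n))

theorem mem_subfieldSubcode {M : Submodule L (Fin n → L)} {x : Fin n → K} :
    x ∈ subfieldSubcode K M ↔ algebraMap K L ∘ x ∈ M := Iff.rfl

theorem extendCoeffs_le_iff {V : Submodule K (Fin n → K)} {M : Submodule L (Fin n → L)} :
    extendCoeffs L V ≤ M ↔ V ≤ subfieldSubcode K M :=
  span_le.trans (map_le_iff_le_comap (q := M.restrictScalars K))

theorem extendCoeffs_mono {V W : Submodule K (Fin n → K)} (h : V ≤ W) :
    extendCoeffs L V ≤ extendCoeffs L W :=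
  span_mono (map_mono h)

theorem finrank_extendCoeffs (V : Submodule K (Fin n → K)) :
    finrank L (extendCoeffs L V) = finrank K V := by
  let b := Module.finBasis K V
  have hV : span K (Set.range fun i => (b i : Fin n → K)) = V := by
    rw [show Set.range (fun i => (b i : Fin n → K)) = V.subtype '' Set.range b from
      Set.range_comp _ _, span_image, b.span_eq, Submodule.map_top, range_subtype]
  have hli : LinearIndependent L
      ((Algebra.linearMap K L).compLeft (Fin n) ∘ fun i => (b i : Fin n → K)) :=
    linearIndependent_algebraMap_comp_iff.mpr (b.linearIndependent.map' V.subtype V.ker_subtype)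
  rw [extendCoeffs, ← hV, map_span, span_span_of_tower, ← Set.range_comp,
    finrank_span_eq_card hli, Fintype.card_fin, hV]

theorem extendCoeffs_dotOrth (V : Submodule K (Fin n → K)) :
    extendCoeffs L (dotOrth V) = dotOrth (extendCoeffs L V) := by
  refine eq_of_le_of_finrank_eq (extendCoeffs_le_iff.mpr fun y hy => ?_) ?_
  · rw [mem_subfieldSubcode, extendCoeffs, mem_dotOrth_span]
    rintro _ ⟨x, hx, rfl⟩
    change algebraMap K L ∘ x ⬝ᵥ algebraMap K L ∘ y = 0
    rw [← RingHom.map_dotProduct, mem_dotOrth.mp hy x hx, map_zero]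
  · have := finrank_dotOrth_add V
    have := finrank_dotOrth_add (extendCoeffs L V)
    rw [finrank_extendCoeffs] at *
    omega

theorem extendCoeffs_top : extendCoeffs L (⊤ : Submodule K (Fin n → K)) = ⊤ :=
  eq_top_of_finrank_eq <| by
    rw [finrank_extendCoeffs, finrank_top, finrank_fin_fun, finrank_fin_fun]

theorem le_extendCoeffs_iff {D : Submodule L (Fin n → L)} {V : Submodule K (Fin n → K)} :
    D ≤ extendCoeffs L V ↔ dotOrth V ≤ subfieldSubcode K (dotOrth D) := by
  rw [← dotOrth_le_dotOrth_iff, ← extendCoeffs_dotOrth, extendCoeffs_le_iff]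

end ExtendCoeffs

section ColumnSpan

variable {K L : Type*} [Field K] [Field L] [Algebra K L] {n r : ℕ}

-- The columns span the image of `x ↦ ∑ j, x j • (b · j)`, and `x` lies in its kernel iff,
-- read in `L^n`, it is orthogonal to every `b i`.
theorem finrank_span_columns_add (b : Fin r → Fin n → L) :
    finrank K (span K (Set.range fun j i => b i j)) +
      finrank K (subfieldSubcode K (dotOrth (span L (Set.range b)))) = n := by
  let T := Fintype.linearCombination K fun j (i : Fin r) => b i j
  have hker : LinearMap.ker T = subfieldSubcode K (dotOrth (span L (Set.range b))) := by
    ext x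
    rw [LinearMap.mem_ker, mem_subfieldSubcode, mem_dotOrth_span, Set.forall_mem_range, funext_iff]
    refine forall_congr' fun i => ?_
    simp [T, Fintype.linearCombination_apply, dotProduct, Algebra.smul_def, mul_comm]
  rw [← Fintype.range_linearCombination, ← hker, LinearMap.finrank_range_add_finrank_ker,
    finrank_fin_fun]

theorem finrank_span_columns_le_iff (b : Fin r → Fin n → L) {w : ℕ} :
    finrank K (span K (Set.range fun j i => b i j)) ≤ w ↔
      ∃ V : Submodule K (Fin n → K),
        finrank K V ≤ w ∧ span L (Set.range b) ≤ extendCoeffs L V := by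
  have hb := finrank_span_columns_add (K := K) b
  constructor
  · intro hw
    set G := subfieldSubcode K (dotOrth (span L (Set.range b)))
    refine ⟨dotOrth G, ?_, le_extendCoeffs_iff.mpr (dotOrth_dotOrth G).le⟩
    have := finrank_dotOrth_add G
    omega
  · rintro ⟨V, hV, hbV⟩
    have := finrank_mono (le_extendCoeffs_iff.mp hbV)
    have := finrank_dotOrth_add V
    omega

end ColumnSpan

section RankWeights

variable {K L : Type*} [Field K] [Field L] [Algebra K L] {n : ℕ}

variable (K) in
def meetFinranks (C : Submodule L (Fin n → L)) (w : ℕ) : Set ℕ :=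
  {d | ∃ V : Submodule K (Fin n → K), finrank K V ≤ w ∧
    d = finrank L ↥(C ⊓ extendCoeffs L V)}

variable (K) in
noncomputable def maxMeet (C : Submodule L (Fin n → L)) (w : ℕ) : ℕ :=
  sSup (meetFinranks K C w)

theorem bddAbove_meetFinranks (C : Submodule L (Fin n → L)) (w : ℕ) :
    BddAbove (meetFinranks K C w) :=
  ⟨finrank L C, by rintro _ ⟨_, _, rfl⟩; exact finrank_mono inf_le_left⟩

theorem finrank_inf_extendCoeffs_le_maxMeet {C : Submodule L (Fin n → L)}
    {V : Submodule K (Fin n → K)} {w : ℕ} (hV : finrank K V ≤ w) :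
    finrank L ↥(C ⊓ extendCoeffs L V) ≤ maxMeet K C w :=
  le_csSup (bddAbove_meetFinranks C w) ⟨V, hV, rfl⟩

variable (K) in
theorem exists_finrank_inf_extendCoeffs_eq_maxMeet (C : Submodule L (Fin n → L)) (w : ℕ) :
    ∃ V : Submodule K (Fin n → K), finrank K V ≤ w ∧
      finrank L ↥(C ⊓ extendCoeffs L V) = maxMeet K C w := by
  obtain ⟨V, hV, h⟩ :=
    Nat.sSup_mem (s := meetFinranks K C w) ⟨_, ⊥, by simp, rfl⟩ (bddAbove_meetFinranks C w)
  exact ⟨V, hV, h.symm⟩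

theorem maxMeet_le_finrank (C : Submodule L (Fin n → L)) (w : ℕ) :
    maxMeet K C w ≤ finrank L C := by
  obtain ⟨V, -, hV⟩ := exists_finrank_inf_extendCoeffs_eq_maxMeet K C w
  exact hV ▸ finrank_mono inf_le_left

theorem maxMeet_le (C : Submodule L (Fin n → L)) (w : ℕ) : maxMeet K C w ≤ w := by
  obtain ⟨V, hVw, hV⟩ := exists_finrank_inf_extendCoeffs_eq_maxMeet K C w
  calc maxMeet K C w = finrank L ↥(C ⊓ extendCoeffs L V) := hV.symm
    _ ≤ finrank L (extendCoeffs L V) := finrank_mono inf_le_right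
    _ = finrank K V := finrank_extendCoeffs V
    _ ≤ w := hVw

theorem finrank_le_maxMeet (C : Submodule L (Fin n → L)) : finrank L C ≤ maxMeet K C n := by
  have := finrank_inf_extendCoeffs_le_maxMeet (C := C) (finrank_top K (Fin n → K)).le
  rwa [extendCoeffs_top, inf_top_eq, finrank_fin_fun] at this

theorem exists_genRankWeight_eq_s8 {C : Submodule L (Fin n → L)} {r : ℕ} (hr : r ≤ finrank L C) :
    ∃ b : Fin r → Fin n → L, LinearIndependent L b ∧ span L (Set.range b) ≤ C ∧
      genRankWeight K C r = finrank K (span K (Set.range fun j i => b i j)) := by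
  obtain ⟨b, hb, hbC⟩ := exists_linearIndependent_span_le hr
  exact (Nat.sInf_mem ⟨_, b, hb, hbC, rfl⟩ : genRankWeight K C r ∈ _)

theorem genRankWeight_le_s8 {C : Submodule L (Fin n → L)} {r : ℕ} {b : Fin r → Fin n → L}
    (hb : LinearIndependent L b) (hbC : span L (Set.range b) ≤ C) :
    genRankWeight K C r ≤ finrank K (span K (Set.range fun j i => b i j)) :=
  Nat.sInf_le ⟨b, hb, hbC, rfl⟩

theorem genRankWeight_le_iff {C : Submodule L (Fin n → L)} {r w : ℕ} (hr : r ≤ finrank L C) :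
    genRankWeight K C r ≤ w ↔ r ≤ maxMeet K C w := by
  constructor
  · intro hw
    obtain ⟨b, hb, hbC, hd⟩ := exists_genRankWeight_eq_s8 (K := K) hr
    rw [hd] at hw
    obtain ⟨V, hV, hbV⟩ := (finrank_span_columns_le_iff b).mp hw
    calc r = finrank L (span L (Set.range b)) := by
          rw [finrank_span_eq_card hb, Fintype.card_fin]
      _ ≤ finrank L ↥(C ⊓ extendCoeffs L V) := finrank_mono (le_inf hbC hbV)
      _ ≤ maxMeet K C w := finrank_inf_extendCoeffs_le_maxMeet hV
  · intro hrw
    obtain ⟨V, hV, hVeq⟩ := exists_finrank_inf_extendCoeffs_eq_maxMeet K C w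
    obtain ⟨b, hb, hbCV⟩ := exists_linearIndependent_span_le (hrw.trans hVeq.ge)
    exact (genRankWeight_le_s8 hb (hbCV.trans inf_le_left)).trans
      ((finrank_span_columns_le_iff b).mpr ⟨V, hV, hbCV.trans inf_le_right⟩)

variable (K) in
theorem exists_eq_genRankWeight_iff {C : Submodule L (Fin n → L)} {w : ℕ} :
    (∃ r, 1 ≤ r ∧ r ≤ finrank L C ∧ w = genRankWeight K C r) ↔
      1 ≤ w ∧ w ≤ n ∧ maxMeet K C (w - 1) < maxMeet K C w := by
  constructor
  · rintro ⟨r, hr1, hrC, rfl⟩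
    have hle := fun v => genRankWeight_le_iff (K := K) (w := v) hrC
    have hpos := (hle 0).not.mpr (by have := maxMeet_le (K := K) C 0; omega)
    have hat := (hle (genRankWeight K C r)).mp le_rfl
    have hbefore := (hle (genRankWeight K C r - 1)).not.mp (by omega)
    exact ⟨by omega, (hle n).mpr (hrC.trans (finrank_le_maxMeet C)), by omega⟩
  · rintro ⟨hw1, -, hjump⟩
    have hle := fun v =>
      genRankWeight_le_iff (K := K) (w := v) (maxMeet_le_finrank (K := K) C w)
    have hat := (hle w).mpr le_rfl
    have hbefore := (hle (w - 1)).not.mpr (by omega)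
    exact ⟨maxMeet K C w, by omega, maxMeet_le_finrank C w, by omega⟩

theorem maxMeet_add_le (C : Submodule L (Fin n → L)) {w : ℕ} (hw : w ≤ n) :
    maxMeet K C w + n ≤ finrank L C + w + maxMeet K (dotOrth C) (n - w) := by
  obtain ⟨V₀, hV₀, hV₀C⟩ := exists_finrank_inf_extendCoeffs_eq_maxMeet K C w
  obtain ⟨U, hUV₀, hU⟩ : ∃ U ≤ dotOrth V₀, finrank K U = n - w :=
    exists_le_finrank_eq (by have := finrank_dotOrth_add V₀; omega)
  have hV₀U : V₀ ≤ dotOrth U := by rwa [← dotOrth_le_dotOrth_iff, dotOrth_dotOrth]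
  have hdim := finrank_inf_add_eq_add_finrank_dotOrth_inf C (extendCoeffs L (dotOrth U))
  rw [← extendCoeffs_dotOrth, dotOrth_dotOrth, finrank_extendCoeffs] at hdim
  have := finrank_dotOrth_add U
  have := finrank_mono (inf_le_inf_left C (extendCoeffs_mono (L := L) hV₀U))
  have := finrank_inf_extendCoeffs_le_maxMeet (C := dotOrth C) hU.le
  omega

theorem maxMeet_add_eq (C : Submodule L (Fin n → L)) {w : ℕ} (hw : w ≤ n) :
    maxMeet K C w + n = finrank L C + w + maxMeet K (dotOrth C) (n - w) := by
  have := maxMeet_add_le (K := K) (dotOrth C) (Nat.sub_le n w)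
  rw [dotOrth_dotOrth, Nat.sub_sub_self hw] at this
  have := finrank_dotOrth_add C
  have := maxMeet_add_le (K := K) C hw
  omega

end RankWeights

theorem jump_iff_not_jump_of_add_eq {f g : ℕ → ℕ} {n k : ℕ}
    (h : ∀ w ≤ n, f w + n = k + w + g (n - w)) {w : ℕ} (hw : 1 ≤ w) (hwn : w ≤ n) :
    g (n + 1 - w - 1) < g (n + 1 - w) ↔ ¬ f (w - 1) < f w := by
  have := h w hwn
  have := h (w - 1) (by omega)
  rw [show n + 1 - w - 1 = n - w by omega, show n + 1 - w = n - (w - 1) by omega]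
  omega

theorem genRankWeight_duality_general
    {Fq Fqm : Type*} [Field Fq] [Field Fqm] [Algebra Fq Fqm]
    {n k : ℕ} (C Cd : Submodule Fqm (Fin n → Fqm))
    (hCk : Module.finrank Fqm C = k) (hCdk : Module.finrank Fqm Cd = n - k)
    (hdual : ∀ y, y ∈ Cd ↔ ∀ x ∈ C, ∑ i, x i * y i = 0) :
    { w | ∃ r : ℕ, 1 ≤ r ∧ r ≤ k ∧ w = genRankWeight Fq C r } ∪
      { w | ∃ r : ℕ, 1 ≤ r ∧ r ≤ n - k ∧ w = n + 1 - genRankWeight Fq Cd r } =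
      Set.Icc 1 n := by
  obtain rfl : Cd = dotOrth C := by ext y; exact hdual y
  subst hCk
  rw [← hCdk]
  ext w
  simp only [Set.mem_union, Set.mem_ofPred_eq, Set.mem_Icc]
  constructor
  · rintro (hC | ⟨r, hr1, hrk, rfl⟩)
    · exact ((exists_eq_genRankWeight_iff Fq).mp hC).imp_right And.left
    · have := (exists_eq_genRankWeight_iff Fq).mp ⟨r, hr1, hrk, rfl⟩
      omega
  · rintro ⟨hw1, hwn⟩
    by_cases hjump : maxMeet Fq C (w - 1) < maxMeet Fq C w
    · exact Or.inl ((exists_eq_genRankWeight_iff Fq).mpr ⟨hw1, hwn, hjump⟩)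
    · have hjumpDual := (jump_iff_not_jump_of_add_eq
        (fun v hv => maxMeet_add_eq (K := Fq) C hv) hw1 hwn).mpr hjump
      obtain ⟨r, hr1, hrk, hr⟩ :=
        (exists_eq_genRankWeight_iff Fq).mpr ⟨by omega, by omega, hjumpDual⟩
      exact Or.inr ⟨r, hr1, hrk, by omega⟩

/-- Duality of generalized rank weights:
`{d_1(C),…,d_k(C)} ∪ {n+1−d_1(C^⊥),…,n+1−d_{n−k}(C^⊥)} = {1,…,n}`. -/
theorem genRankWeight_duality
    {Fq Fqm : Type*} [Field Fq] [Field Fqm] [Algebra Fq Fqm]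
    {n k : ℕ} (C Cd : Submodule Fqm (Fin n → Fqm))
    (hCk : Module.finrank Fqm C = k) (hCdk : Module.finrank Fqm Cd = n - k) (hkn : k ≤ n)
    (hdual : ∀ y, y ∈ Cd ↔ ∀ x ∈ C, ∑ i, x i * y i = 0)
    (hnd : Nondeg Fq C) (hndd : Nondeg Fq Cd) :
    { w | ∃ r : ℕ, 1 ≤ r ∧ r ≤ k ∧ w = genRankWeight Fq C r } ∪
      { w | ∃ r : ℕ, 1 ≤ r ∧ r ≤ n - k ∧ w = n + 1 - genRankWeight Fq Cd r } =
      Set.Icc 1 n :=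
  genRankWeight_duality_general C Cd hCk hCdk hdual
end

section
/- Let X be an F_q-subspace of (F_{q^m})^k with dim_{F_q} X = n, and suppose there exists an integer l such that for every F_{q^m}-subspace S of (F_{q^m})^k with dim_{F_{q^m}} S = r one has dim_{F_q}(S ∩ X) = l. Then q^n = (q^l − 1)·(q^{mk} − 1)/(q^{mr} − 1) + 1. -/
/-!
Double count the pairs `(v, S)` with `v` a nonzero vector of an `F_q`-subspace `W` and `S` an
`r`-dimensional `F_{q^m}`-subspace containing `v`. Since `GL_k(F_{q^m})` is transitive on nonzero
vectors, every `v ≠ 0` lies in the same number `A > 0` of such `S`; if every `S` meets `W` in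
`q^c - 1` nonzero vectors, this gives `(q^{dim W} - 1) A = N (q^c - 1)`, with `N` the number of
`r`-dimensional subspaces. Comparing the identities for `W = X` (where `c = l`) and
`W = (F_{q^m})^k` (where `c = mr`) eliminates `A` and `N`.
-/

open Module

theorem Set.ncard_mul_eq_ncard_mul {α β : Type*} (r : α → β → Prop) {s : Set α} {t : Set β}
    (hs : s.Finite) (ht : t.Finite) {m n : ℕ}
    (hm : ∀ a ∈ s, {b ∈ t | r a b}.ncard = m) (hn : ∀ b ∈ t, {a ∈ s | r a b}.ncard = n) :
    s.ncard * m = t.ncard * n := by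
  classical
  rw [ncard_eq_toFinset_card s hs, ncard_eq_toFinset_card t ht]
  refine Finset.card_mul_eq_card_mul r (fun a ha => ?_) (fun b hb => ?_)
  · rw [← hm a (hs.mem_toFinset.1 ha), ncard_eq_toFinset_card _ (ht.subset fun _ h => h.1)]
    congr 1; ext; simp [Finset.mem_bipartiteAbove]
  · rw [← hn b (ht.mem_toFinset.1 hb), ncard_eq_toFinset_card _ (hs.subset fun _ h => h.1)]
    congr 1; ext; simp [Finset.mem_bipartiteBelow]

section

variable {K V : Type*} [Field K] [AddCommGroup V] [Module K V]

theorem exists_linearEquiv_apply_eq {x y : V} (hx : x ≠ 0) (hy : y ≠ 0) :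
    ∃ e : V ≃ₗ[K] V, e x = y := by
  obtain ⟨e, he⟩ := Submodule.exists_linearEquiv_restrict_eq
    ((LinearEquiv.toSpanNonzeroSingleton K V x hx).symm ≪≫ₗ
      LinearEquiv.toSpanNonzeroSingleton K V y hy)
  have h := he (LinearEquiv.toSpanNonzeroSingleton K V x hx 1)
  rw [LinearEquiv.trans_apply, LinearEquiv.symm_apply_apply,
    LinearEquiv.toSpanNonzeroSingleton_one, LinearEquiv.toSpanNonzeroSingleton_one] at h
  exact ⟨e, h.symm⟩

theorem Submodule.exists_finrank_eq {r : ℕ} (hr : r ≤ finrank K V) :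
    ∃ S : Submodule K V, finrank K S = r := by
  obtain ⟨f, hf⟩ := exists_linearIndependent_of_le_finrank hr
  exact ⟨Submodule.span K (Set.range f), by rw [finrank_span_eq_card hf, Fintype.card_fin]⟩

theorem ncard_setOf_finrank_eq_and_mem_eq (r : ℕ) {x y : V} (hx : x ≠ 0) (hy : y ≠ 0) :
    {S : Submodule K V | finrank K S = r ∧ x ∈ S}.ncard =
      {S : Submodule K V | finrank K S = r ∧ y ∈ S}.ncard := by
  obtain ⟨e, rfl⟩ := exists_linearEquiv_apply_eq (K := K) hx hy
  rw [← Set.ncard_image_of_injective _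
    (Submodule.map_injective_of_injective (f := (e : V →ₗ[K] V)) e.injective)]
  congr 1
  ext S
  constructor
  · rintro ⟨S, ⟨hS, hxS⟩, rfl⟩
    exact ⟨(LinearEquiv.finrank_map_eq e S).trans hS, Submodule.mem_map_of_mem hxS⟩
  · rintro ⟨hS, hxS⟩
    refine ⟨S.map (e.symm : V →ₗ[K] V), ⟨(LinearEquiv.finrank_map_eq e.symm S).trans hS, ?_⟩, ?_⟩
    · simpa [Submodule.mem_map_equiv] using hxS
    · ext; simp [Submodule.mem_map_equiv]

end

theorem Submodule.ncard_sdiff_singleton_zero {F V : Type*} [Field F] [AddCommGroup V] [Module F V]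
    [Finite V] (W : Submodule F V) : ((W : Set V) \ {0}).ncard = Nat.card F ^ finrank F W - 1 := by
  rw [Set.ncard_sdiff_singleton_of_mem W.zero_mem, ← Nat.card_coe_set_eq, SetLike.coe_sort_coe,
    Module.natCard_eq_pow_finrank (K := F)]

section

variable {F K V : Type*} [Field F] [Field K] [Algebra F K] [AddCommGroup V] [Module K V]
  [Module F V] [IsScalarTower F K V]

theorem Submodule.finrank_restrictScalars_eq_mul (S : Submodule K V) :
    finrank F (S.restrictScalars F) = finrank F K * finrank K S :=
  ((Submodule.restrictScalarsEquiv F K V S).restrictScalars F).finrank_eq.trans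
    (Module.finrank_mul_finrank F K S).symm

variable [Finite V]

theorem pow_finrank_sub_one_mul_eq_ncard_mul (W : Submodule F V) {r A c : ℕ}
    (hA : ∀ x : V, x ≠ 0 → {S : Submodule K V | finrank K S = r ∧ x ∈ S}.ncard = A)
    (hc : ∀ S : Submodule K V, finrank K S = r → finrank F ↥(W ⊓ S.restrictScalars F) = c) :
    (Nat.card F ^ finrank F W - 1) * A =
      {S : Submodule K V | finrank K S = r}.ncard * (Nat.card F ^ c - 1) := by
  rw [← W.ncard_sdiff_singleton_zero]
  refine Set.ncard_mul_eq_ncard_mul (fun x S => x ∈ S) (Set.toFinite _) (Set.toFinite _)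
    (fun x hx => ?_) (fun S hS => ?_)
  · rw [← hA x hx.2]
    rfl
  · rw [← hc S hS, ← Submodule.ncard_sdiff_singleton_zero]
    congr 1
    ext x
    simp [and_right_comm]

theorem pow_finrank_sub_one_mul_eq_of_forall_finrank_inf_eq (W : Submodule F V) {r c : ℕ}
    (hr : 1 ≤ r) (hrV : r ≤ finrank K V)
    (hc : ∀ S : Submodule K V, finrank K S = r → finrank F ↥(W ⊓ S.restrictScalars F) = c) :
    (Nat.card F ^ finrank F W - 1) * (Nat.card F ^ (finrank F K * r) - 1) =
      (Nat.card F ^ c - 1) * (Nat.card F ^ finrank F V - 1) := by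
  set q := Nat.card F
  obtain ⟨S₀, hS₀⟩ := Submodule.exists_finrank_eq (K := K) hrV
  obtain ⟨x₀, hx₀S₀, hx₀⟩ := Submodule.exists_mem_ne_zero_of_ne_bot (p := S₀)
    fun h => by rw [h, finrank_bot] at hS₀; omega
  set A := {S : Submodule K V | finrank K S = r ∧ x₀ ∈ S}.ncard
  set N := {S : Submodule K V | finrank K S = r}.ncard
  have hA : ∀ x : V, x ≠ 0 → _ = A := fun x hx => ncard_setOf_finrank_eq_and_mem_eq r hx hx₀
  have hA_pos : 0 < A := (Set.ncard_pos (Set.toFinite _)).2 ⟨S₀, hS₀, hx₀S₀⟩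
  have hcountW : (q ^ finrank F W - 1) * A = N * (q ^ c - 1) :=
    pow_finrank_sub_one_mul_eq_ncard_mul W hA hc
  have hcountTop : (q ^ finrank F V - 1) * A = N * (q ^ (finrank F K * r) - 1) := by
    simpa only [finrank_top] using pow_finrank_sub_one_mul_eq_ncard_mul ⊤ hA
      fun S hS => by rw [top_inf_eq, Submodule.finrank_restrictScalars_eq_mul, hS]
  refine Nat.eq_of_mul_eq_mul_right hA_pos ?_
  calc (q ^ finrank F W - 1) * (q ^ (finrank F K * r) - 1) * A
      = N * (q ^ c - 1) * (q ^ (finrank F K * r) - 1) := by rw [mul_right_comm, hcountW]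
    _ = (q ^ c - 1) * (N * (q ^ (finrank F K * r) - 1)) := by ring
    _ = (q ^ c - 1) * (q ^ finrank F V - 1) * A := by rw [← hcountTop, mul_assoc]

end

theorem constant_intersection_count_general
    {Fq Fqm : Type*} [Field Fq] [Field Fqm] [Algebra Fq Fqm]
    [Fintype Fq] [Fintype Fqm]
    {q m k n r l : ℕ} (hq : Fintype.card Fq = q) (hm : Module.finrank Fq Fqm = m)
    (hr1 : 1 ≤ r) (hrk : r ≤ k - 1)
    (X : Submodule Fq (Fin k → Fqm)) (hXn : Module.finrank Fq X = n)
    (hl : ∀ S : Submodule Fqm (Fin k → Fqm), Module.finrank Fqm S = r →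
      Module.finrank Fq
        (X ⊓ Submodule.restrictScalars Fq S : Submodule Fq (Fin k → Fqm)) = l) :
    q ^ n = (q ^ l - 1) * (q ^ (m * k) - 1) / (q ^ (m * r) - 1) + 1 ∧
    (q ^ n - 1) * (q ^ (m * r) - 1) = (q ^ l - 1) * (q ^ (m * k) - 1) := by
  have hV : finrank Fq (Fin k → Fqm) = m * k := by
    rw [← finrank_mul_finrank Fq Fqm, hm, finrank_fin_fun]
  have hcross : (q ^ n - 1) * (q ^ (m * r) - 1) = (q ^ l - 1) * (q ^ (m * k) - 1) := by
    have := pow_finrank_sub_one_mul_eq_of_forall_finrank_inf_eq X hr1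
      (by rw [finrank_fin_fun]; omega) hl
    rwa [Nat.card_eq_fintype_card, hq, hXn, hm, hV] at this
  have hq1 : 1 < q := hq ▸ Fintype.one_lt_card
  have hqr : 0 < q ^ (m * r) - 1 := by
    have hm_pos : 0 < m := hm ▸ finrank_pos
    have : 1 < q ^ (m * r) := Nat.one_lt_pow (Nat.mul_ne_zero hm_pos.ne' (by omega)) hq1
    omega
  refine ⟨?_, hcross⟩
  rw [← hcross, Nat.mul_div_cancel _ hqr, Nat.sub_add_cancel (Nat.one_le_pow _ _ (by omega))]

/-- If every `r`-dimensional `F_{q^m}`-subspace `S` of `(F_{q^m})^k` meets the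
`F_q`-subspace `X` (of `F_q`-dimension `n`) in an `F_q`-subspace of dimension exactly `l`,
then `q^n = (q^l − 1)(q^{mk} − 1)/(q^{mr} − 1) + 1`
(equivalently, `(q^n − 1)(q^{mr} − 1) = (q^l − 1)(q^{mk} − 1)`). -/
theorem constant_intersection_count
    {Fq Fqm : Type*} [Field Fq] [Field Fqm] [Algebra Fq Fqm]
    [Fintype Fq] [Fintype Fqm]
    {q m k n r l : ℕ} (hq : Fintype.card Fq = q) (hm : Module.finrank Fq Fqm = m)
    (hr1 : 1 ≤ r) (hrk : r ≤ k - 1) (hk : 1 < k)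
    (X : Submodule Fq (Fin k → Fqm)) (hXn : Module.finrank Fq X = n)
    (hl : ∀ S : Submodule Fqm (Fin k → Fqm), Module.finrank Fqm S = r →
      Module.finrank Fq
        (X ⊓ Submodule.restrictScalars Fq S : Submodule Fq (Fin k → Fqm)) = l) :
    q ^ n = (q ^ l - 1) * (q ^ (m * k) - 1) / (q ^ (m * r) - 1) + 1 ∧
    (q ^ n - 1) * (q ^ (m * r) - 1) = (q ^ l - 1) * (q ^ (m * k) - 1) :=
  constant_intersection_count_general hq hm hr1 hrk X hXn hl
end

section
/- Suppose k > 1 and the F_q-subspace X ⊆ (F_{q^m})^k, with dim_{F_q} X = n, is not contained in any hyperplane and satisfies dim_{F_q}(S ∩ X) = n − d for every F_{q^m}-hyperplane S of (F_{q^m})^k, where 0 < n − d < n. Then n = mk and X = (F_{q^m})^k. -/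
open Matrix Finset

private lemma aux_pow_dvd_contra {q e M N : ℕ} (hq : 2 ≤ q)
    (h : M + q ^ e = N) (hM : q ^ (e + 1) ∣ M) (hN : q ^ (e + 1) ∣ N) : False := by
  have h1 : q ^ (e + 1) ∣ q ^ e := by
    have h2 := Nat.dvd_sub hN hM
    have h3 : N - M = q ^ e := by omega
    rwa [h3] at h2
  have h2 : q ^ (e + 1) ≤ q ^ e := Nat.le_of_dvd (Nat.pow_pos (by omega)) h1
  have h3 : q ^ e < q ^ (e + 1) := Nat.pow_lt_pow_succ (by omega)
  omega

private lemma aux_numeric {q m B a b : ℕ} (hq : 2 ≤ q) (hm : 1 ≤ m) (hB : 1 ≤ B)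
    (hb : 1 ≤ b) (hba : b < a)
    (heq : q ^ (B + m) * q ^ b + q ^ a + q ^ B = q ^ a * q ^ B + q ^ (B + m) + q ^ b) :
    a = B + m := by
  rw [← pow_add, ← pow_add] at heq
  -- heq : q^(B+m+b) + q^a + q^B = q^(a+B) + q^(B+m) + q^b
  have hbB : b = B := by
    rcases Nat.lt_trichotomy b B with h | h | h
    · exact absurd (aux_pow_dvd_contra (q := q) (e := b) hq heq.symm
        (dvd_add (pow_dvd_pow q (by omega)) (pow_dvd_pow q (by omega)))
        (dvd_add (dvd_add (pow_dvd_pow q (by omega)) (pow_dvd_pow q (by omega)))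
          (pow_dvd_pow q (by omega)))) id
    · exact h
    · exact absurd (aux_pow_dvd_contra (q := q) (e := B) hq heq
        (dvd_add (pow_dvd_pow q (by omega)) (pow_dvd_pow q (by omega)))
        (dvd_add (dvd_add (pow_dvd_pow q (by omega)) (pow_dvd_pow q (by omega)))
          (pow_dvd_pow q (by omega)))) id
  subst hbB
  have heq2 : q ^ (b + m + b) + q ^ a = q ^ (a + b) + q ^ (b + m) :=
    Nat.add_right_cancel heq
  rcases Nat.lt_trichotomy a (b + m) with h | h | h
  · exfalso
    have e1 : q ^ (a + b) ≤ q ^ (b + m + b - 1) := Nat.pow_le_pow_right (by omega) (by omega)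
    have e2 : q ^ (b + m) ≤ q ^ (b + m + b - 1) := Nat.pow_le_pow_right (by omega) (by omega)
    have e3 : q ^ (b + m + b) = q ^ (b + m + b - 1) * q := by
      rw [← pow_succ]; congr 1; omega
    have e4 : 2 * q ^ (b + m + b - 1) ≤ q ^ (b + m + b - 1) * q := by
      calc 2 * q ^ (b + m + b - 1) = q ^ (b + m + b - 1) * 2 := mul_comm _ _
        _ ≤ q ^ (b + m + b - 1) * q := Nat.mul_le_mul_left _ hq
    have e5 : 0 < q ^ a := Nat.pow_pos (by omega)
    linarith
  · exact h
  · exfalso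
    have e1 : q ^ (b + m + b) ≤ q ^ (a + b - 1) := Nat.pow_le_pow_right (by omega) (by omega)
    have e2 : q ^ a ≤ q ^ (a + b - 1) := Nat.pow_le_pow_right (by omega) (by omega)
    have e3 : q ^ (a + b) = q ^ (a + b - 1) * q := by
      rw [← pow_succ]; congr 1; omega
    have e4 : 2 * q ^ (a + b - 1) ≤ q ^ (a + b - 1) * q := by
      calc 2 * q ^ (a + b - 1) = q ^ (a + b - 1) * 2 := mul_comm _ _
        _ ≤ q ^ (a + b - 1) * q := Nat.mul_le_mul_left _ hq
    have e5 : 0 < q ^ (b + m) := Nat.pow_pos (by omega)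
    linarith

/-- dot product with a fixed left vector, as a linear map in the right argument -/
private def dotLeft {K : Type*} [Field K] {k : ℕ} (c : Fin k → K) :
    (Fin k → K) →ₗ[K] K where
  toFun x := c ⬝ᵥ x
  map_add' x y := dotProduct_add c x y
  map_smul' t x := dotProduct_smul t c x

/-- dot product with a fixed right vector, as a linear map in the left argument -/
private def dotRight {K : Type*} [Field K] {k : ℕ} (x : Fin k → K) :
    (Fin k → K) →ₗ[K] K where
  toFun c := c ⬝ᵥ x
  map_add' c d := add_dotProduct c d x
  map_smul' t c := smul_dotProduct t c x

@[simp] private lemma dotLeft_apply {K : Type*} [Field K] {k : ℕ} (c x : Fin k → K) :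
    dotLeft c x = c ⬝ᵥ x := rfl

@[simp] private lemma dotRight_apply {K : Type*} [Field K] {k : ℕ} (x c : Fin k → K) :
    dotRight x c = c ⬝ᵥ x := rfl

private lemma dotLeft_surj {K : Type*} [Field K] {k : ℕ} {c : Fin k → K} (hc : c ≠ 0) :
    Function.Surjective (dotLeft c) := by
  obtain ⟨i, hi⟩ : ∃ i, c i ≠ 0 := by
    by_contra h; push_neg at h; exact hc (funext h)
  intro y
  refine ⟨Pi.single i ((c i)⁻¹ * y), ?_⟩
  rw [dotLeft_apply, dotProduct_single, ← mul_assoc, mul_inv_cancel₀ hi, one_mul]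

private lemma dotRight_surj {K : Type*} [Field K] {k : ℕ} {x : Fin k → K} (hx : x ≠ 0) :
    Function.Surjective (dotRight x) := by
  obtain ⟨i, hi⟩ : ∃ i, x i ≠ 0 := by
    by_contra h; push_neg at h; exact hx (funext h)
  intro y
  refine ⟨Pi.single i (y * (x i)⁻¹), ?_⟩
  rw [dotRight_apply, single_dotProduct, mul_assoc, inv_mul_cancel₀ hi, mul_one]

private lemma finrank_ker_eq {K : Type*} [Field K] {k : ℕ} (f : (Fin k → K) →ₗ[K] K)
    (hf : Function.Surjective f) : Module.finrank K (LinearMap.ker f) = k - 1 := by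
  have h := LinearMap.finrank_range_add_finrank_ker f
  rw [LinearMap.range_eq_top.mpr hf, finrank_top, Module.finrank_self,
    Module.finrank_fin_fun] at h
  omega

/-- If `k > 1` and the `F_q`-subspace `X ⊆ (F_{q^m})^k` of `F_q`-dimension `n`
is not contained in any hyperplane and meets every `F_{q^m}`-hyperplane in an `F_q`-subspace
of dimension exactly `n − d`, where `0 < d < n`, then `n = mk` and `X = (F_{q^m})^k`. -/
theorem constant_hyperplane_intersection_full
    {Fq Fqm : Type*} [Field Fq] [Field Fqm] [Algebra Fq Fqm]
    [Fintype Fq] [Fintype Fqm]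
    {m k n d : ℕ} (hm : Module.finrank Fq Fqm = m) (hk : 1 < k)
    (hd0 : 0 < d) (hdn : d < n)
    (X : Submodule Fq (Fin k → Fqm)) (hXn : Module.finrank Fq X = n)
    (hXhyp : ∀ H : Submodule Fqm (Fin k → Fqm), Module.finrank Fqm H = k - 1 →
      ¬ (X : Set (Fin k → Fqm)) ⊆ (H : Set (Fin k → Fqm)))
    (hconst : ∀ S : Submodule Fqm (Fin k → Fqm), Module.finrank Fqm S = k - 1 →
      Module.finrank Fq
        (X ⊓ Submodule.restrictScalars Fq S : Submodule Fq (Fin k → Fqm)) = n - d) :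
    n = m * k ∧ X = ⊤ := by
  classical
  set q : ℕ := Fintype.card Fq with hqdef
  have hq2 : 1 < q := Fintype.one_lt_card
  have hm1 : 1 ≤ m := by
    have : 0 < Module.finrank Fq Fqm := Module.finrank_pos
    omega
  have hQ : Fintype.card Fqm = q ^ m := by
    rw [← hm]; exact Module.card_eq_pow_finrank
  have hfinV : Module.finrank Fqm (Fin k → Fqm) = k := Module.finrank_fin_fun Fqm
  have hCV : Fintype.card (Fin k → Fqm) = q ^ (m * k) := by
    have h1 : Fintype.card (Fin k → Fqm) = Fintype.card Fqm ^ k := by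
      have h2 := Module.card_eq_pow_finrank (K := Fqm) (V := Fin k → Fqm)
      rwa [hfinV] at h2
    rw [h1, hQ, ← pow_mul]
  -- count for each nonzero c
  have countL : ∀ c : Fin k → Fqm, c ≠ 0 →
      (univ.filter fun x => c ≠ 0 ∧ x ∈ X ∧ c ⬝ᵥ x = 0).card = q ^ (n - d) := by
    intro c hc
    have hker : Module.finrank Fqm (LinearMap.ker (dotLeft c)) = k - 1 :=
      finrank_ker_eq _ (dotLeft_surj hc)
    have hW := hconst (LinearMap.ker (dotLeft c)) hker
    haveI : Fintype (X ⊓ Submodule.restrictScalars Fq (LinearMap.ker (dotLeft c)) :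
        Submodule Fq (Fin k → Fqm)) := Fintype.ofFinite _
    have hcard : Fintype.card (X ⊓ Submodule.restrictScalars Fq (LinearMap.ker (dotLeft c)) :
        Submodule Fq (Fin k → Fqm)) = q ^ (n - d) := by
      rw [Module.card_eq_pow_finrank (K := Fq), hW]
    calc (univ.filter fun x => c ≠ 0 ∧ x ∈ X ∧ c ⬝ᵥ x = 0).card
        = Fintype.card {x : Fin k → Fqm // c ≠ 0 ∧ x ∈ X ∧ c ⬝ᵥ x = 0} :=
          (Fintype.card_of_subtype _ (fun x => by simp)).symm
      _ = Fintype.card (X ⊓ Submodule.restrictScalars Fq (LinearMap.ker (dotLeft c)) :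
            Submodule Fq (Fin k → Fqm)) := by
          refine Fintype.card_congr (Equiv.subtypeEquivRight fun x => ?_)
          simp [Submodule.mem_inf, Submodule.restrictScalars_mem, LinearMap.mem_ker, hc]
      _ = q ^ (n - d) := hcard
  -- count for each nonzero x in X
  have countR : ∀ x : Fin k → Fqm, x ≠ 0 → x ∈ X →
      (univ.filter fun c => c ≠ 0 ∧ x ∈ X ∧ c ⬝ᵥ x = 0).card = q ^ (m * (k - 1)) - 1 := by
    intro x hx hxX
    have hker : Module.finrank Fqm (LinearMap.ker (dotRight x)) = k - 1 :=
      finrank_ker_eq _ (dotRight_surj hx)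
    haveI : Fintype (LinearMap.ker (dotRight x)) := Fintype.ofFinite _
    have hcard : Fintype.card (LinearMap.ker (dotRight x)) = q ^ (m * (k - 1)) := by
      rw [Module.card_eq_pow_finrank (K := Fqm), hker, hQ, ← pow_mul]
    have h1 : (univ.filter fun c : Fin k → Fqm => c ⬝ᵥ x = 0).card = q ^ (m * (k - 1)) := by
      calc (univ.filter fun c : Fin k → Fqm => c ⬝ᵥ x = 0).card
          = Fintype.card {c : Fin k → Fqm // c ⬝ᵥ x = 0} :=
            (Fintype.card_of_subtype _ (fun c => by simp)).symm
        _ = Fintype.card (LinearMap.ker (dotRight x)) := by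
            refine Fintype.card_congr (Equiv.subtypeEquivRight fun c => ?_)
            simp [LinearMap.mem_ker]
        _ = q ^ (m * (k - 1)) := hcard
    have h2 : (univ.filter fun c : Fin k → Fqm => c ≠ 0 ∧ x ∈ X ∧ c ⬝ᵥ x = 0)
        = (univ.filter fun c : Fin k → Fqm => c ⬝ᵥ x = 0).erase 0 := by
      ext c
      simp only [Finset.mem_filter, Finset.mem_erase, Finset.mem_univ, true_and, hxX] <;> tauto
    rw [h2, Finset.card_erase_of_mem (by simp [zero_dotProduct]), h1]
  -- the double counting identity
  have key : (q ^ (m * k) - 1) * q ^ (n - d)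
      = (q ^ (m * k) - 1) + (q ^ n - 1) * (q ^ (m * (k - 1)) - 1) := by
    have swap : ∑ c : Fin k → Fqm,
          (univ.filter fun x => c ≠ 0 ∧ x ∈ X ∧ c ⬝ᵥ x = 0).card
        = ∑ x : Fin k → Fqm,
          (univ.filter fun c => c ≠ 0 ∧ x ∈ X ∧ c ⬝ᵥ x = 0).card := by
      simp_rw [Finset.card_filter]
      exact Finset.sum_comm
    have lhs_eq : ∑ c : Fin k → Fqm,
        (univ.filter fun x => c ≠ 0 ∧ x ∈ X ∧ c ⬝ᵥ x = 0).card
        = (q ^ (m * k) - 1) * q ^ (n - d) := by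
      rw [← Finset.add_sum_erase _ _ (Finset.mem_univ (0 : Fin k → Fqm))]
      have h0 : (univ.filter fun x => (0 : Fin k → Fqm) ≠ 0 ∧ x ∈ X ∧
          (0 : Fin k → Fqm) ⬝ᵥ x = 0).card = 0 := by
        simp
      rw [h0, zero_add]
      have hrest : ∀ c ∈ (univ : Finset (Fin k → Fqm)).erase 0,
          (univ.filter fun x => c ≠ 0 ∧ x ∈ X ∧ c ⬝ᵥ x = 0).card = q ^ (n - d) := by
        intro c hc
        exact countL c (Finset.mem_erase.mp hc).1
      rw [Finset.sum_congr rfl hrest, Finset.sum_const,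
        Finset.card_erase_of_mem (Finset.mem_univ _), Finset.card_univ, hCV, smul_eq_mul]
    have rhs_eq : ∑ x : Fin k → Fqm,
        (univ.filter fun c => c ≠ 0 ∧ x ∈ X ∧ c ⬝ᵥ x = 0).card
        = (q ^ (m * k) - 1) + (q ^ n - 1) * (q ^ (m * (k - 1)) - 1) := by
      haveI : Fintype X := Fintype.ofFinite _
      have hCX : Fintype.card X = q ^ n := by
        rw [Module.card_eq_pow_finrank (K := Fq), hXn]
      have hval : ∀ x : Fin k → Fqm,
          (univ.filter fun c => c ≠ 0 ∧ x ∈ X ∧ c ⬝ᵥ x = 0).card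
          = if x ∈ X then (if x = 0 then q ^ (m * k) - 1 else q ^ (m * (k - 1)) - 1)
            else 0 := by
        intro x
        by_cases hxX : x ∈ X
        · by_cases hx0 : x = 0
          · subst hx0
            rw [if_pos hxX, if_pos rfl]
            have hfe : (univ.filter fun c : Fin k → Fqm => c ≠ 0 ∧ (0 : Fin k → Fqm) ∈ X ∧
                c ⬝ᵥ (0 : Fin k → Fqm) = 0) = univ.erase 0 := by
              ext c
              simp [hxX, dotProduct_zero]
            rw [hfe, Finset.card_erase_of_mem (Finset.mem_univ _), Finset.card_univ, hCV]
          · rw [if_pos hxX, if_neg hx0]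
            exact countR x hx0 hxX
        · rw [if_neg hxX]
          rw [Finset.card_eq_zero]
          ext c
          simp [hxX]
      rw [Finset.sum_congr rfl (fun x _ => hval x)]
      rw [← Finset.sum_filter]
      have h0mem : (0 : Fin k → Fqm) ∈ univ.filter (fun x => x ∈ X) := by
        simp [X.zero_mem]
      rw [← Finset.add_sum_erase _ _ h0mem]
      rw [if_pos rfl]
      have hrest : ∀ x ∈ (univ.filter fun x : Fin k → Fqm => x ∈ X).erase 0,
          (if x = 0 then q ^ (m * k) - 1 else q ^ (m * (k - 1)) - 1)
          = q ^ (m * (k - 1)) - 1 := by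
        intro x hx
        rw [if_neg (Finset.mem_erase.mp hx).1]
      rw [Finset.sum_congr rfl hrest, Finset.sum_const, smul_eq_mul,
        Finset.card_erase_of_mem h0mem]
      congr 2
      have : (univ.filter fun x : Fin k → Fqm => x ∈ X).card = Fintype.card X := by
        exact (Fintype.card_of_subtype _ (fun x => by simp)).symm
      rw [this, hCX]
    rw [← lhs_eq, swap, rhs_eq]
  -- derive the additive identity and apply the numeric lemma
  have hmk : n = m * k := by
    have hBk : m * (k - 1) + m = m * k := by
      have h1 : k - 1 + 1 = k := by omega
      calc m * (k - 1) + m = m * ((k - 1) + 1) := by ring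
        _ = m * k := by rw [h1]
    have o1 : (1 : ℕ) ≤ q ^ (m * k) := Nat.one_le_pow _ _ (by omega)
    have o2 : (1 : ℕ) ≤ q ^ n := Nat.one_le_pow _ _ (by omega)
    have o3 : (1 : ℕ) ≤ q ^ (m * (k - 1)) := Nat.one_le_pow _ _ (by omega)
    have hcast := congrArg (Nat.cast : ℕ → ℤ) key
    push_cast [Nat.cast_sub o1, Nat.cast_sub o2, Nat.cast_sub o3] at hcast
    have hadd : q ^ (m * (k - 1) + m) * q ^ (n - d) + q ^ n + q ^ (m * (k - 1))
        = q ^ n * q ^ (m * (k - 1)) + q ^ (m * (k - 1) + m) + q ^ (n - d) := by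
      have hgoal : ((q ^ (m * (k - 1) + m) * q ^ (n - d) + q ^ n + q ^ (m * (k - 1)) : ℕ) : ℤ)
          = ((q ^ n * q ^ (m * (k - 1)) + q ^ (m * (k - 1) + m) + q ^ (n - d) : ℕ) : ℤ) := by
        push_cast
        rw [hBk]
        linarith [hcast]
      exact_mod_cast hgoal
    have := aux_numeric (by omega) hm1
      (Nat.mul_pos (by omega) (by omega : 0 < k - 1)) (by omega) (by omega) hadd
    exact this.trans hBk
  refine ⟨hmk, ?_⟩
  have hfull : Module.finrank Fq (Fin k → Fqm) = m * k := by
    rw [← Module.finrank_mul_finrank Fq Fqm (Fin k → Fqm), hm, hfinV]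
  exact Submodule.eq_top_of_finrank_eq (by rw [hXn, hmk, hfull])
end

section
/- The Hadamard rank metric code H_1(q,m,k), whose generator matrix has as columns an F_q-basis of (F_{q^m})^k, is a constant rank weight code: every nonzero codeword has rank weight exactly m. -/
open Matrix

/-- The Hadamard rank metric code `H_1(q,m,k)`, whose generator matrix has as
columns an `F_q`-basis `P_1,…,P_{mk}` of `(F_{q^m})^k`, is a constant rank weight code: every
nonzero codeword has rank weight exactly `m`. -/
theorem hadamard_constant_rank_weight
    {Fq Fqm : Type*} [Field Fq] [Field Fqm] [Algebra Fq Fqm]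
    [Fintype Fq] [Fintype Fqm]
    {m k : ℕ} (hm : Module.finrank Fq Fqm = m)
    (P : Fin (m * k) → Fin k → Fqm)
    (hPind : LinearIndependent Fq P)
    (hPspan : Submodule.span Fq (Set.range P) = ⊤) :
    ∀ x ∈ Submodule.span Fqm
        (Set.range fun i : Fin k => fun j : Fin (m * k) => P j i),
      x ≠ 0 → Module.finrank Fq (Submodule.span Fq (Set.range x)) = m := by
  intro x hx hx0
  rw [Finsupp.mem_span_range_iff_exists_finsupp] at hx
  obtain ⟨c, hc⟩ := hx
  -- ψ : Fqm-linear functional v ↦ ∑ c i * v i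
  let ψ : (Fin k → Fqm) →ₗ[Fqm] Fqm :=
    { toFun := fun v => c.sum fun i ci => ci * v i
      map_add' := by
        intro u v
        simp [Finsupp.sum, mul_add, Finset.sum_add_distrib]
      map_smul' := by
        intro a v
        simp [Finsupp.sum, Finset.mul_sum, mul_left_comm] }
  have hxψ : x = fun j => ψ (P j) := by
    funext j
    have := congrFun hc j
    simpa [ψ, Finsupp.sum] using this.symm
  have hrange : Set.range x = ψ '' Set.range P := by
    rw [hxψ]
    exact (Set.range_comp _ _)
  have hspan : Submodule.span Fq (Set.range x)
      = Submodule.map (ψ.restrictScalars Fq) (Submodule.span Fq (Set.range P)) := by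
    rw [hrange, Submodule.map_span]
    rfl
  have hψtop : LinearMap.range ψ = ⊤ := by
    rcases eq_bot_or_eq_top (LinearMap.range ψ) with h | h
    · exfalso
      apply hx0
      funext j
      have : ψ (P j) ∈ LinearMap.range ψ := ⟨P j, rfl⟩
      rw [h, Submodule.mem_bot] at this
      rw [hxψ]
      simpa using this
    · exact h
  have : Submodule.span Fq (Set.range x) = ⊤ := by
    rw [hspan, hPspan, Submodule.map_top]
    have hsurj : Function.Surjective ψ := LinearMap.range_eq_top.mp hψtop
    exact LinearMap.range_eq_top.mpr hsurj
  rw [this, finrank_top, hm]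
end

section
/- Classification of constant rank weight codes: Let C be an [n,k,d] non-degenerate F_{q^m}-linear rank metric code in which every nonzero codeword has rank weight d. If k > 1, then n = mk, and the columns of any generator matrix of C form an F_q-basis of (F_{q^m})^k; moreover d = m and d_r(C) = mr for all 1 ≤ r ≤ k. -/
open Matrix

/-!
Let `V ⊆ F_{q^m}^k` be the `F_q`-span of the columns `g_j` of `G`, so `dim V = n`. The codeword
`u G` has coordinates `u ⬝ᵥ g_j`, so its rank weight is the dimension of the image of `V` under
`w ↦ u ⬝ᵥ w`. Counting the pairs `(u, w) ∈ F_{q^m}^k × V` with `u ⬝ᵥ w = 0` once by `u` and once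
by `w` gives `q^n + (q^{mk} - 1) q^{n-d} = q^{mk} + (q^n - 1) q^{m(k-1)}`, and with `1 ≤ d ≤ m`
this forces `d = m` and `n = mk`. Hence `V = F_{q^m}^k`. An `r`-dimensional subcode has a
generator matrix `U G` with `U` of rank `r`; its columns span `U V = F_{q^m}^r`, of dimension `mr`.
-/

open Module

theorem eq_of_pow_double_count {q a b d m : ℕ} (hq : 2 ≤ q) (hd : 0 < d) (hdm : d ≤ m)
    (hb : 0 < b)
    (h : q ^ (a + d) + q ^ (b + m) * q ^ a + q ^ b = q ^ (b + m) + q ^ (a + d) * q ^ b + q ^ a) :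
    d = m ∧ a = b := by
  rw [pow_add, pow_add] at h
  rcases hdm.lt_or_eq with hlt | rfl
  · exfalso
    have hP : q ≤ q ^ d := Nat.le_self_pow hd.ne' q
    have hB : q ≤ q ^ b := Nat.le_self_pow hb.ne' q
    have hA : 1 ≤ q ^ a := Nat.one_le_pow _ _ (by omega)
    have hQ : q ^ d * q ≤ q ^ m := by
      rw [← pow_succ]; exact Nat.pow_le_pow_right (by omega) hlt
    generalize q ^ a = A, q ^ b = B, q ^ d = P, q ^ m = Q at *
    rcases hA.eq_or_lt with rfl | hA
    · nlinarith
    -- `A ≥ 2` and `Q ≥ 2P` make the left side strictly larger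
    · zify at *
      nlinarith [mul_nonneg (mul_nonneg (by linarith : (0 : ℤ) ≤ B)
        (by linarith : (0 : ℤ) ≤ A - 2)) (by nlinarith : (0 : ℤ) ≤ Q - P),
        mul_nonneg (by linarith : (0 : ℤ) ≤ B) (by nlinarith : (0 : ℤ) ≤ Q - 2 * P)]
  · exact ⟨rfl, Nat.pow_right_injective hq (by nlinarith [Nat.one_lt_pow hd.ne' hq])⟩

theorem Fintype.sum_add_eq_of_forall_ne {α : Type*} [Fintype α] (f : α → ℕ) (a : α) {c : ℕ}
    (hf : ∀ x ≠ a, f x = c) : ∑ x, f x + c = f a + Nat.card α * c := by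
  classical
  rw [← Finset.add_sum_erase _ _ (Finset.mem_univ a),
    Finset.sum_congr rfl fun x hx => hf x (Finset.ne_of_mem_erase hx), Finset.sum_const,
    Finset.card_erase_of_mem (Finset.mem_univ a), smul_eq_mul, Finset.card_univ, add_assoc,
    ← Nat.succ_mul, Nat.succ_eq_add_one, Nat.sub_add_cancel (Fintype.card_pos_iff.2 ⟨a⟩),
    Nat.card_eq_fintype_card]

theorem LinearMap.natCard_ker_eq_card_filter {R M P : Type*} [Semiring R] [AddCommMonoid M]
    [AddCommMonoid P] [Module R M] [Module R P] [Fintype M] [DecidableEq P] (f : M →ₗ[R] P) :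
    Nat.card (LinearMap.ker f) = (Finset.univ.filter fun x => f x = 0).card := by
  rw [← Fintype.card_subtype, ← Nat.card_eq_fintype_card]; rfl

theorem LinearMap.sum_natCard_ker_eq_sum_natCard_ker_flip {R S M N P : Type*} [Semiring R]
    [Semiring S] [AddCommMonoid M] [AddCommMonoid N] [AddCommMonoid P] [Module R M] [Module S N]
    [Module R P] [Module S P] [SMulCommClass S R P] [Fintype M] [Fintype N]
    (B : M →ₗ[R] N →ₗ[S] P) :
    ∑ x, Nat.card (LinearMap.ker (B x)) = ∑ y, Nat.card (LinearMap.ker (B.flip y)) := by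
  classical
  simp only [LinearMap.natCard_ker_eq_card_filter, LinearMap.flip_apply]
  exact Finset.sum_card_bipartiteAbove_eq_sum_card_bipartiteBelow _

theorem LinearMap.natCard_ker {F M N : Type*} [Field F] [AddCommGroup M] [Module F M]
    [FiniteDimensional F M] [AddCommGroup N] [Module F N] (f : M →ₗ[F] N) :
    Nat.card (LinearMap.ker f) = Nat.card F ^ (finrank F M - finrank F (LinearMap.range f)) := by
  rw [Module.natCard_eq_pow_finrank (K := F), ← f.finrank_range_add_finrank_ker,
    Nat.add_sub_cancel_left]

theorem Matrix.dotProductBilin_flip_ne_zero {R ι : Type*} [CommSemiring R] [Fintype ι]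
    {w : ι → R} (hw : w ≠ 0) : (dotProductBilin R R).flip w ≠ 0 := by
  classical
  obtain ⟨i, hi⟩ := Function.ne_iff.mp hw
  exact fun h => hi (by simpa [single_one_dotProduct] using LinearMap.congr_fun h (Pi.single i 1))

theorem Matrix.natCard_ker_dotProductBilin_flip {K ι : Type*} [Field K] [Fintype K] [Fintype ι]
    {w : ι → K} (hw : w ≠ 0) :
    Nat.card (LinearMap.ker ((dotProductBilin K K).flip w)) =
      Nat.card K ^ (Fintype.card ι - 1) := by
  rw [LinearMap.natCard_ker, Module.Dual.range_eq_top_of_ne_zero (dotProductBilin_flip_ne_zero hw),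
    finrank_top, finrank_self, finrank_fintype_fun_eq_card]

theorem finrank_span_range_pos {F M ι : Type*} [Field F] [AddCommGroup M] [Module F M]
    [Finite ι] {x : ι → M} (hx : x ≠ 0) : 0 < finrank F (Submodule.span F (Set.range x)) := by
  have := FiniteDimensional.span_of_finite F (Set.finite_range x)
  obtain ⟨i, hi⟩ := Function.ne_iff.mp hx
  exact Module.finrank_pos_iff_exists_ne_zero.2
    ⟨⟨x i, Submodule.subset_span ⟨i, rfl⟩⟩, by simpa using hi⟩

theorem finrank_eq_of_forall_finrank_map_dotProduct_eq {F K ι : Type*} [Field F] [Field K]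
    [Algebra F K] [Fintype F] [Fintype K] [Fintype ι] (hι : 1 < Fintype.card ι)
    (V : Submodule F (ι → K)) {n d : ℕ} (hV : finrank F V = n) (hd : 0 < d)
    (hweight : ∀ u ≠ 0, finrank F (V.map (dotProductBilin K F u)) = d) :
    d = finrank F K ∧ n = finrank F K * Fintype.card ι := by
  classical
  set m := finrank F K
  set k := Fintype.card ι
  set q := Nat.card F
  have hQ : Nat.card K = q ^ m := Module.natCard_eq_pow_finrank
  have hm : 0 < m := Module.finrank_pos
  have : Nonempty ι := Fintype.card_pos_iff.mp (by omega)
  obtain ⟨u₀, hu₀⟩ := exists_ne (0 : ι → K)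
  have hdm : d ≤ m := hweight u₀ hu₀ ▸ Submodule.finrank_le _
  have hdn : d ≤ n := hweight u₀ hu₀ ▸ hV ▸ Submodule.finrank_map_le _ _
  let B := (dotProductBilin K F).compl₂ V.subtype
  have hleft : ∀ u ≠ 0, Nat.card (LinearMap.ker (B u)) = q ^ (n - d) := fun u hu => by
    rw [LinearMap.natCard_ker, show B u = dotProductBilin K F u ∘ₗ V.subtype from rfl,
      LinearMap.range_comp, Submodule.range_subtype, hweight u hu, hV]
  have hright : ∀ w ≠ 0, Nat.card (LinearMap.ker (B.flip w)) = Nat.card K ^ (k - 1) :=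
    fun w hw => by
      rw [show B.flip w = (dotProductBilin K K).flip w by ext; simp [B]]
      exact natCard_ker_dotProductBilin_flip (by simpa using hw)
  have hcardV : Nat.card V = q ^ n := by rw [Module.natCard_eq_pow_finrank (K := F), hV]
  have hcardK : Nat.card (ι → K) = q ^ (m * k) := by
    rw [Nat.card_fun, hQ, Nat.card_eq_fintype_card, pow_mul]
  have hcount := B.sum_natCard_ker_eq_sum_natCard_ker_flip
  have h1 := Fintype.sum_add_eq_of_forall_ne _ 0 hleft
  have h2 := Fintype.sum_add_eq_of_forall_ne _ 0 hright
  simp only [map_zero, LinearMap.ker_zero, Nat.card_congr Submodule.topEquiv.toEquiv, hcardV,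
    hcardK, hQ, ← pow_mul] at h1 h2
  have hmk : m * (k - 1) + m = m * k := by
    rw [← Nat.mul_succ]; congr 1; omega
  have hn : n - d + d = n := Nat.sub_add_cancel hdn
  obtain ⟨hdm_eq, hnd⟩ := eq_of_pow_double_count (q := q) (a := n - d) (b := m * (k - 1))
    Finite.one_lt_card hd hdm (Nat.mul_pos hm (by omega)) (by rw [hn, hmk]; linarith)
  exact ⟨hdm_eq, by rw [← hn, hnd, hdm_eq, hmk]⟩

section ColumnSpan

variable {F K : Type*} [Field F] [Field K] [Algebra F K]

theorem Matrix.span_range_vecMul {ι n : Type*} [Fintype ι] (G : Matrix ι n K) (u : ι → K) :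
    Submodule.span F (Set.range (u ᵥ* G)) =
      (Submodule.span F (Set.range Gᵀ)).map (dotProductBilin K F u) := by
  rw [Submodule.map_span, ← Set.range_comp (f := Gᵀ)]; rfl

theorem Matrix.span_range_transpose_mul {l ι n : Type*} [Fintype ι] (U : Matrix l ι K)
    (G : Matrix ι n K) :
    Submodule.span F (Set.range (U * G)ᵀ) =
      (Submodule.span F (Set.range Gᵀ)).map (U.mulVecLin.restrictScalars F) := by
  rw [Submodule.map_span, ← Set.range_comp (f := Gᵀ)]; rfl

theorem Matrix.mulVec_surjective_of_linearIndependent_row {l ι : Type*} [Fintype l] [Fintype ι]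
    {U : Matrix l ι K} (hU : LinearIndependent K U.row) : Function.Surjective U.mulVec := by
  rw [← U.coe_mulVecLin, ← LinearMap.range_eq_top]
  apply Submodule.eq_top_of_finrank_eq
  rw [← Matrix.rank, hU.rank_matrix, finrank_fintype_fun_eq_card]

theorem finrank_span_range_transpose_eq [FiniteDimensional F K] {l ι n : Type*} [Fintype l]
    [Fintype ι] (G : Matrix ι n K) (hG : Submodule.span F (Set.range Gᵀ) = ⊤) {b : Matrix l n K}
    (hb : LinearIndependent K b)
    (hbG : Submodule.span K (Set.range b) ≤ Submodule.span K (Set.range G)) :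
    finrank F (Submodule.span F (Set.range bᵀ)) = finrank F K * Fintype.card l := by
  have hcoord (i : l) : ∃ u, G.vecMulLinear u = b i := by
    rw [← LinearMap.mem_range, range_vecMulLinear]; exact hbG (Submodule.subset_span ⟨i, rfl⟩)
  choose U hU using hcoord
  have hbUG : b = of U * G := funext fun i => (hU i).symm
  have hUind : LinearIndependent K (of U).row :=
    .of_comp G.vecMulLinear (by rwa [show ⇑G.vecMulLinear ∘ (of U).row = b from funext hU])
  rw [hbUG, span_range_transpose_mul, hG, Submodule.map_top, LinearMap.range_eq_top.2
    (mulVec_surjective_of_linearIndependent_row hUind), finrank_top, finrank_pi_fintype]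
  simp [mul_comm]

theorem genRankWeight_eq_of_forall {n r w : ℕ} {C : Submodule K (Fin n → K)}
    (hall : ∀ b : Matrix (Fin r) (Fin n) K, LinearIndependent K b →
      Submodule.span K (Set.range b) ≤ C → finrank F (Submodule.span F (Set.range bᵀ)) = w)
    (hex : ∃ b : Matrix (Fin r) (Fin n) K, LinearIndependent K b ∧
      Submodule.span K (Set.range b) ≤ C) :
    genRankWeight F C r = w := by
  obtain ⟨b, hb, hbC⟩ := hex
  refine le_antisymm (Nat.sInf_le ⟨b, hb, hbC, (hall b hb hbC).symm⟩)
    (le_csInf ⟨_, b, hb, hbC, rfl⟩ ?_)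
  rintro _ ⟨b', hb', hb'C, rfl⟩
  exact (hall b' hb' hb'C).ge

end ColumnSpan

theorem constant_rank_weight_classification_general
    {Fq Fqm : Type*} [Field Fq] [Field Fqm] [Algebra Fq Fqm]
    [Fintype Fq] [Fintype Fqm]
    {m n k d : ℕ} (hm : Module.finrank Fq Fqm = m) (hk : 1 < k)
    (C : Submodule Fqm (Fin n → Fqm))
    (G : Fin k → Fin n → Fqm) (hGind : LinearIndependent Fqm G)
    (hGspan : Submodule.span Fqm (Set.range G) = C)
    (hnd : LinearIndependent Fq (fun j : Fin n => fun i : Fin k => G i j))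
    (hconst : ∀ x ∈ C, x ≠ 0 →
      Module.finrank Fq (Submodule.span Fq (Set.range x)) = d) :
    n = m * k ∧
    Submodule.span Fq (Set.range fun j : Fin n => fun i : Fin k => G i j) = ⊤ ∧
    d = m ∧
    ∀ r : ℕ, 1 ≤ r → r ≤ k → genRankWeight Fq C r = m * r := by
  subst hm
  set V := Submodule.span Fq (Set.range (G : Matrix (Fin k) (Fin n) Fqm)ᵀ)
  have hVn : finrank Fq V = n := (finrank_span_eq_card hnd).trans (Fintype.card_fin n)
  have hcode (u : Fin k → Fqm) : u ᵥ* G ∈ C := by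
    rw [← hGspan]; exact (range_vecMulLinear G).le (LinearMap.mem_range_self _ u)
  have hne {u : Fin k → Fqm} (hu : u ≠ 0) : u ᵥ* G ≠ 0 := fun h =>
    hu (vecMul_injective_iff.2 hGind (h.trans (zero_vecMul G).symm))
  have hweight (u : Fin k → Fqm) (hu : u ≠ 0) :
      finrank Fq (V.map (dotProductBilin Fqm Fq u)) = d := by
    rw [← hconst _ (hcode u) (hne hu), span_range_vecMul G u]
  have hd : 0 < d := by
    have : NeZero k := ⟨by omega⟩
    obtain ⟨u, hu⟩ := exists_ne (0 : Fin k → Fqm)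
    exact hconst _ (hcode u) (hne hu) ▸ finrank_span_range_pos (hne hu)
  obtain ⟨rfl, hn⟩ :=
    finrank_eq_of_forall_finrank_map_dotProduct_eq (by simpa using hk) V hVn hd hweight
  have hV : V = ⊤ := Submodule.eq_top_of_finrank_eq <| by
    rw [hVn, hn, finrank_pi_fintype, Finset.sum_const, Finset.card_univ, smul_eq_mul, mul_comm]
  refine ⟨by simpa using hn, hV, rfl, fun r _ hrk => genRankWeight_eq_of_forall
    (fun b hb hbC => ?_) ⟨G ∘ Fin.castLE hrk, hGind.comp _ (Fin.castLE_injective hrk), ?_⟩⟩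
  · simpa using finrank_span_range_transpose_eq G hV hb (hGspan ▸ hbC)
  · rw [← hGspan]; exact Submodule.span_mono (Set.range_comp_subset_range _ _)

/-- Classification of constant rank weight codes: if `C` is an `[n,k,d]`
non-degenerate linear rank metric code (generator matrix `G` with rows `G i`, columns
`F_q`-linearly independent) in which every nonzero codeword has rank weight `d`, and `k > 1`,
then `n = mk`, the columns of `G` form an `F_q`-basis of `(F_{q^m})^k`, `d = m`, and
`d_r(C) = mr` for `1 ≤ r ≤ k`. -/
theorem constant_rank_weight_classification
    {Fq Fqm : Type*} [Field Fq] [Field Fqm] [Algebra Fq Fqm]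
    [Fintype Fq] [Fintype Fqm]
    {m n k d : ℕ} (hm : Module.finrank Fq Fqm = m) (hk : 1 < k)
    (C : Submodule Fqm (Fin n → Fqm)) (hCk : Module.finrank Fqm C = k)
    (G : Fin k → Fin n → Fqm) (hGind : LinearIndependent Fqm G)
    (hGspan : Submodule.span Fqm (Set.range G) = C)
    (hnd : LinearIndependent Fq (fun j : Fin n => fun i : Fin k => G i j))
    (hconst : ∀ x ∈ C, x ≠ 0 →
      Module.finrank Fq (Submodule.span Fq (Set.range x)) = d) :
    n = m * k ∧
    Submodule.span Fq (Set.range fun j : Fin n => fun i : Fin k => G i j) = ⊤ ∧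
    d = m ∧
    ∀ r : ℕ, 1 ≤ r → r ≤ k → genRankWeight Fq C r = m * r :=
  constant_rank_weight_classification_general hm hk C G hGind hGspan hnd hconst
end

section
/- The dual of the Hadamard rank metric code, H_2(q,m,k) = H_1(q,m,k)^⊥, has parameters [mk, (m−1)k, 2]: length mk, dimension (m−1)k, and minimum rank distance 2 (for m ≥ 2). -/
/-!
The dual code is the kernel of the `𝔽_{q^m}`-linear map `y ↦ ∑ⱼ yⱼ Pⱼ`, which is onto
`𝔽_{q^m}^k` since the `Pⱼ` span it already over `𝔽_q`; this gives the dimension `mk - k`.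
A codeword of rank weight at most one has the form `y = c v` with `c` over `𝔽_q`, and then
`v ∑ⱼ cⱼ Pⱼ = 0` forces `c = 0` by the `𝔽_q`-independence of the `Pⱼ`. Conversely, for
`e ≠ 0` and `α ∉ 𝔽_q`, writing `e = ∑ⱼ cⱼ Pⱼ` and `α e = ∑ⱼ dⱼ Pⱼ` over `𝔽_q` gives the
nonzero codeword `α c - d`, whose coordinates lie in `span_{𝔽_q} {α, 1}`.
-/

open Module Submodule

theorem forall_mem_span_range_sum_mul_eq_zero_iff {R ι κ : Type*} [CommSemiring R] [Fintype ι]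
    (S : κ → ι → R) (y : ι → R) :
    (∀ x ∈ span R (Set.range S), ∑ j, x j * y j = 0) ↔ ∀ i, ∑ j, S i j * y j = 0 := by
  have key : ∀ x : ι → R, ∑ j, x j * y j = Fintype.linearCombination R y x := fun x => by
    simp [Fintype.linearCombination_apply]
  simp only [key, ← LinearMap.mem_ker, ← SetLike.le_def, span_le, Set.range_subset_iff,
    SetLike.mem_coe]

theorem sum_smul_eq_zero_iff_forall_sum_mul_eq_zero {R ι κ : Type*} [CommSemiring R] [Fintype ι]
    (P : ι → κ → R) (y : ι → R) :
    ∑ j, y j • P j = 0 ↔ ∀ i, ∑ j, P j i * y j = 0 := by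
  simp [funext_iff, Finset.sum_apply, mul_comm]

theorem finrank_ker_linearCombination {F L V ι : Type*} [Field F] [Field L] [Algebra F L]
    [AddCommGroup V] [Module L V] [Module F V] [IsScalarTower F L V] [Fintype ι] {P : ι → V}
    (hP : span F (Set.range P) = ⊤) :
    finrank L (LinearMap.ker (Fintype.linearCombination L P)) = Fintype.card ι - finrank L V := by
  have hrange : LinearMap.range (Fintype.linearCombination L P) = ⊤ := by
    rw [Fintype.range_linearCombination, eq_top_iff]
    exact fun v _ => span_le_restrictScalars F L _ (hP ▸ mem_top)
  have := (Fintype.linearCombination L P).finrank_range_add_finrank_ker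
  rw [hrange, finrank_top, finrank_fintype_fun_eq_card] at this
  omega

noncomputable abbrev rankWeight (F : Type*) {M ι : Type*} [DivisionRing F] [AddCommGroup M]
    [Module F M] (x : ι → M) : ℕ :=
  finrank F (span F (Set.range x))

section RankWeight

variable {F M ι : Type*} [Field F] [AddCommGroup M] [Module F M]

theorem exists_eq_smul_of_rankWeight_le_one [Finite ι] {x : ι → M} (hx : rankWeight F x ≤ 1) :
    ∃ v : M, ∃ c : ι → F, ∀ j, x j = c j • v := by
  have := FiniteDimensional.span_of_finite F (Set.finite_range x)
  obtain ⟨v, hv⟩ := ((span F (Set.range x)).finrank_le_one_iff_isPrincipal.mp hx).principal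
  have hmem : ∀ j, x j ∈ F ∙ v := fun j => hv ▸ subset_span (Set.mem_range_self j)
  choose c hc using fun j => mem_span_singleton.mp (hmem j)
  exact ⟨v, c, fun j => (hc j).symm⟩

theorem rankWeight_le_two_of_forall_mem_span_pair {x : ι → M} {a b : M}
    (hx : ∀ j, x j ∈ span F {a, b}) : rankWeight F x ≤ 2 := by
  classical
  let s : Finset M := {a, b}
  have hxs : ∀ j, x j ∈ span F (s : Set M) := by simpa [s] using hx
  calc rankWeight F x ≤ finrank F (span F (s : Set M)) :=
        finrank_mono (span_le.mpr (Set.range_subset_iff.mpr hxs))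
    _ ≤ s.card := finrank_span_finset_le_card s
    _ ≤ 2 := Finset.card_le_two

end RankWeight

section LinearCombination

variable {F L V ι : Type*} [Field F] [Field L] [Algebra F L] [AddCommGroup V] [Module L V]
  [Module F V] [IsScalarTower F L V] [Fintype ι] {P : ι → V}

theorem two_le_rankWeight_of_sum_smul_eq_zero (hP : LinearIndependent F P) {x : ι → L}
    (hx : ∑ j, x j • P j = 0) (hx0 : x ≠ 0) : 2 ≤ rankWeight F x := by
  by_contra! hlt
  obtain ⟨v, c, hc⟩ := exists_eq_smul_of_rankWeight_le_one (Nat.le_of_lt_succ hlt)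
  have hv : v ≠ 0 := fun hv => hx0 (funext fun j => by simp [hc, hv])
  have hsum : v • ∑ j, c j • P j = 0 := by
    simpa [hc, Finset.smul_sum, smul_assoc, smul_comm v] using hx
  have hc0 := Fintype.linearIndependent_iff.mp hP c ((smul_eq_zero.mp hsum).resolve_left hv)
  exact hx0 (funext fun j => by simp [hc, hc0])

theorem exists_ne_zero_sum_smul_eq_zero_rankWeight_le_two [Nontrivial V]
    (hP : span F (Set.range P) = ⊤) {α : L} (hα : α ∉ Set.range (algebraMap F L)) :
    ∃ y : ι → L, y ≠ 0 ∧ ∑ j, y j • P j = 0 ∧ rankWeight F y ≤ 2 := by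
  obtain ⟨e, he⟩ := exists_ne (0 : V)
  obtain ⟨c, hc⟩ :=
    (mem_span_range_iff_exists_fun F).mp (hP ▸ mem_top : e ∈ span F (Set.range P))
  obtain ⟨d, hd⟩ :=
    (mem_span_range_iff_exists_fun F).mp (hP ▸ mem_top : α • e ∈ span F (Set.range P))
  refine ⟨fun j => c j • α - d j • 1, ?_, ?_, ?_⟩
  · obtain ⟨j, hj⟩ : ∃ j, c j ≠ 0 := by
      by_contra! h
      exact he (by simp [← hc, h])
    intro hy
    have hαj : α = algebraMap F L (d j / c j) := by
      have hyj := congrFun hy j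
      simp only [Algebra.smul_def, mul_one, Pi.zero_apply, sub_eq_zero] at hyj
      rw [map_div₀, eq_div_iff (by simpa using hj), mul_comm, hyj]
    exact hα ⟨_, hαj.symm⟩
  · simp only [sub_smul, Finset.sum_sub_distrib, smul_assoc, one_smul, smul_comm _ α,
      ← Finset.smul_sum, hc, hd, sub_self]
  · exact rankWeight_le_two_of_forall_mem_span_pair fun j =>
      sub_mem (smul_mem _ _ (subset_span (Set.mem_insert _ _)))
        (smul_mem _ _ (subset_span (Set.mem_insert_of_mem _ rfl)))

end LinearCombination

theorem exists_notMem_range_algebraMap {F L : Type*} [Field F] [Field L] [Algebra F L]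
    (h : 2 ≤ finrank F L) : ∃ α : L, α ∉ Set.range (algebraMap F L) := by
  by_contra! hsurj
  have := finrank_of_bijective_algebraMap
    ⟨(algebraMap F L).injective, fun α => hsurj α⟩
  omega

theorem hadamard_dual_parameters_general
    {Fq Fqm : Type*} [Field Fq] [Field Fqm] [Algebra Fq Fqm]
    {m k : ℕ} (hm : Module.finrank Fq Fqm = m) (hk0 : 0 < k)
    (P : Fin (m * k) → Fin k → Fqm)
    (hPind : LinearIndependent Fq P)
    (hPspan : Submodule.span Fq (Set.range P) = ⊤)
    (C Cd : Submodule Fqm (Fin (m * k) → Fqm))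
    (hC : C = Submodule.span Fqm
      (Set.range fun i : Fin k => fun j : Fin (m * k) => P j i))
    (hCd : ∀ y, y ∈ Cd ↔ ∀ x ∈ C, ∑ i, x i * y i = 0) :
    Module.finrank Fqm Cd = (m - 1) * k ∧
    (2 ≤ m → sInf { w | ∃ x ∈ Cd, x ≠ 0 ∧
      w = Module.finrank Fq (Submodule.span Fq (Set.range x)) } = 2) := by
  have hCd_ker : Cd = LinearMap.ker (Fintype.linearCombination Fqm P) := by
    ext y
    rw [hCd, hC, forall_mem_span_range_sum_mul_eq_zero_iff, LinearMap.mem_ker,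
      Fintype.linearCombination_apply, sum_smul_eq_zero_iff_forall_sum_mul_eq_zero]
  refine ⟨?_, fun hm2 => ?_⟩
  · rw [hCd_ker, finrank_ker_linearCombination hPspan, Fintype.card_fin, finrank_fin_fun,
      Nat.sub_one_mul]
  have : Nonempty (Fin k) := ⟨⟨0, hk0⟩⟩
  have hlow : ∀ x ∈ Cd, x ≠ 0 → 2 ≤ rankWeight Fq x := fun x hx hx0 =>
    two_le_rankWeight_of_sum_smul_eq_zero hPind (by rwa [hCd_ker] at hx) hx0
  obtain ⟨α, hα⟩ := exists_notMem_range_algebraMap (hm ▸ hm2 : 2 ≤ finrank Fq Fqm)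
  obtain ⟨y, hy0, hy, hyw⟩ := exists_ne_zero_sum_smul_eq_zero_rankWeight_le_two hPspan hα
  have hyCd : y ∈ Cd := hCd_ker ▸ hy
  refine IsLeast.csInf_eq ⟨⟨y, hyCd, hy0, (hyw.antisymm (hlow y hyCd hy0)).symm⟩, ?_⟩
  rintro _ ⟨x, hx, hx0, rfl⟩
  exact hlow x hx hx0

/-- The dual `H_2(q,m,k)` of the Hadamard rank metric code `H_1(q,m,k)` has
parameters `[mk, (m−1)k, 2]`: length `mk`, dimension `(m−1)k`, and minimum rank distance `2`
(for `m ≥ 2`). -/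
theorem hadamard_dual_parameters
    {Fq Fqm : Type*} [Field Fq] [Field Fqm] [Algebra Fq Fqm]
    [Fintype Fq] [Fintype Fqm]
    {m k : ℕ} (hm : Module.finrank Fq Fqm = m) (hk0 : 0 < k)
    (P : Fin (m * k) → Fin k → Fqm)
    (hPind : LinearIndependent Fq P)
    (hPspan : Submodule.span Fq (Set.range P) = ⊤)
    (C Cd : Submodule Fqm (Fin (m * k) → Fqm))
    (hC : C = Submodule.span Fqm
      (Set.range fun i : Fin k => fun j : Fin (m * k) => P j i))
    (hCd : ∀ y, y ∈ Cd ↔ ∀ x ∈ C, ∑ i, x i * y i = 0) :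
    Module.finrank Fqm Cd = (m - 1) * k ∧
    (2 ≤ m → sInf { w | ∃ x ∈ Cd, x ≠ 0 ∧
      w = Module.finrank Fq (Submodule.span Fq (Set.range x)) } = 2) :=
  hadamard_dual_parameters_general hm hk0 P hPind hPspan C Cd hC hCd
end

section
/- Let C be an [n,k] linear rank metric code with parity check matrix H, and for 1 ≤ u ≤ n let Δ_u = min{ rank(H·M^T) : M ∈ F_q^{(n−u)×n}, rank(M) = n−u }. Then d_{n−u−Δ_u}(C) ≤ n − u < d_{n−u−Δ_u+1}(C) (whenever these generalized rank weights are defined). -/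
/-! The first inequality is witnessed by a matrix attaining `Δ`. For the second, a full-rank
`M ∈ F_q^{n×i}` with `i ≤ n − u` extends to a full-rank `M' ∈ F_q^{n×(n−u)}`, and the
`n − u − i` extra columns raise the rank of `H·M` by at most `n − u − i`. Hence
`rank(H·M) ≥ Δ − (n − u − i)`, i.e. `i − rank(H·M) ≤ n − u − Δ`, so `M` cannot witness
`d_{n−u−Δ+1} ≤ i`. -/

open Matrix

/-- The `r`-th generalized rank weight of a code with parity check matrix `H`:
`d_r(C) = min{ i : ∃ M ∈ F_q^{n×i}, rank M = i, i − r ≥ rank(H·M) }`. -/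
noncomputable def genRankWeightPC (Fq : Type*) {Fqm : Type*} [Field Fq] [Field Fqm]
    [Algebra Fq Fqm] {n k : ℕ} (H : Matrix (Fin (n - k)) (Fin n) Fqm) (r : ℕ) : ℕ :=
  sInf { i | ∃ M : Matrix (Fin n) (Fin i) Fq,
    M.rank = i ∧ (H * M.map (algebraMap Fq Fqm)).rank + r ≤ i }

open Module Submodule

namespace Matrix

variable {K : Type*} [Field K] {m n : Type*}

theorem rank_eq_card_iff_linearIndependent_col [Fintype n] {A : Matrix m n K} :
    A.rank = Fintype.card n ↔ LinearIndependent K A.col := by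
  rw [rank_eq_finrank_span_cols, linearIndependent_iff_card_eq_finrank_span, eq_comm]
  rfl

theorem rank_le_rank_submatrix_add [Fintype m] [Fintype n] {ι : Type*} [Fintype ι]
    (A : Matrix m n K) {e : ι → n} (he : Function.Injective e) :
    A.rank ≤ (A.submatrix id e).rank + (Fintype.card n - Fintype.card ι) := by
  classical
  let rest : ((Set.range e)ᶜ : Set n) → m → K := fun j => A.col j
  have hcard : Fintype.card ((Set.range e)ᶜ : Set n) = Fintype.card n - Fintype.card ι := by
    rw [Fintype.card_compl_set, Set.card_range_of_injective he]
  calc A.rank = finrank K (span K (Set.range A.col)) := rank_eq_finrank_span_cols A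
    _ ≤ finrank K (span K (Set.range (A.submatrix id e).col) ⊔ span K (Set.range rest) :
          Submodule K (m → K)) := by
      rw [← span_union]
      refine Submodule.finrank_mono (span_mono ?_)
      rintro _ ⟨j, rfl⟩
      by_cases hj : j ∈ Set.range e
      · obtain ⟨i, rfl⟩ := hj
        exact Or.inl ⟨i, rfl⟩
      · exact Or.inr ⟨⟨j, hj⟩, rfl⟩
    _ ≤ finrank K (span K (Set.range (A.submatrix id e).col)) +
          finrank K (span K (Set.range rest)) :=
      finrank_add_le_finrank_add_finrank _ _
    _ ≤ (A.submatrix id e).rank + (Fintype.card n - Fintype.card ι) := by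
      rw [← rank_eq_finrank_span_cols, ← hcard]
      exact add_le_add_right (finrank_range_le_card rest) _

end Matrix

theorem exists_linearIndependent_extend_fin {K V : Type*} [Field K] [AddCommGroup V]
    [Module K V] [FiniteDimensional K V] {m s : ℕ} {v : Fin m → V} (hv : LinearIndependent K v)
    (hms : m ≤ s) (hs : s ≤ finrank K V) :
    ∃ w : Fin s → V, LinearIndependent K w ∧ w ∘ Fin.castLE hms = v := by
  induction s, hms using Nat.le_induction with
  | base => exact ⟨v, hv, by ext; simp⟩
  | succ s hms ih =>
    obtain ⟨w, hw, rfl⟩ := ih (by omega)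
    obtain ⟨x, hx⟩ := exists_linearIndependent_snoc_of_lt_finrank hw (by omega)
    exact ⟨Fin.snoc w x, hx, funext fun i =>
      Fin.snoc_castSucc (α := fun _ => V) x w (Fin.castLE hms i)⟩

theorem exists_linearIndependent_rank_mul_map_le {K L l : Type*} [Field K] [Field L]
    [Algebra K L] [Fintype l] {n i s : ℕ} (H : Matrix l (Fin n) L)
    (M : Matrix (Fin n) (Fin i) K) (hM : M.rank = i) (his : i ≤ s) (hsn : s ≤ n) :
    ∃ w : Fin s → Fin n → K, LinearIndependent K w ∧
      (H * ((of w).map (algebraMap K L))ᵀ).rank ≤ (H * M.map (algebraMap K L)).rank + (s - i) := by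
  have hM_li : LinearIndependent K M.col := by
    rw [← rank_eq_card_iff_linearIndependent_col, Fintype.card_fin, hM]
  obtain ⟨w, hw, hw_ext⟩ := exists_linearIndependent_extend_fin hM_li his
    (by rwa [finrank_fin_fun])
  have hM_sub : H * M.map (algebraMap K L) =
      (H * ((of w).map (algebraMap K L))ᵀ).submatrix id (Fin.castLE his) := by
    have hMw (j b) : M j b = w (Fin.castLE his b) j := congrFun (congrFun hw_ext.symm b) j
    ext a b
    simp [mul_apply, hMw]
  refine ⟨w, hw, ?_⟩
  simpa only [Fintype.card_fin, ← hM_sub] using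
    rank_le_rank_submatrix_add (H * ((of w).map (algebraMap K L))ᵀ) (Fin.castLE_injective his)

theorem wiretap_generalized_weights_general
    {Fq Fqm : Type*} [Field Fq] [Field Fqm] [Algebra Fq Fqm]
    {n k u : ℕ}
    (H : Matrix (Fin (n - k)) (Fin n) Fqm)
    (hu1 : 1 ≤ u) (hun : u ≤ n)
    (Δ : ℕ)
    (hΔ : Δ = sInf { w | ∃ M : Matrix (Fin (n - u)) (Fin n) Fq,
      M.rank = n - u ∧ w = (H * (M.map (algebraMap Fq Fqm)).transpose).rank })
    (hdef2 : n - u - Δ + 1 ≤ k) :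
    genRankWeightPC Fq (k := k) H (n - u - Δ) ≤ n - u ∧
      n - u < genRankWeightPC Fq (k := k) H (n - u - Δ + 1) := by
  have hΔ_le (w : Fin (n - u) → Fin n → Fq) (hw : LinearIndependent Fq w) :
      Δ ≤ (H * ((of w).map (algebraMap Fq Fqm))ᵀ).rank :=
    hΔ ▸ Nat.sInf_le ⟨of w, (hw.rank_matrix (M := of w)).trans (Fintype.card_fin _), rfl⟩
  have hΔ_nonempty : { w | ∃ M : Matrix (Fin (n - u)) (Fin n) Fq,
      M.rank = n - u ∧ w = (H * (M.map (algebraMap Fq Fqm)).transpose).rank }.Nonempty := by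
    obtain ⟨w, hw⟩ := exists_linearIndependent_of_le_finrank (R := Fq) (M := Fin n → Fq)
      (n := n - u) (by rw [finrank_fin_fun]; omega)
    exact ⟨_, of w, (hw.rank_matrix (M := of w)).trans (Fintype.card_fin _), rfl⟩
  obtain ⟨MΔ, hMΔ, hΔ_eq⟩ := hΔ ▸ Nat.sInf_mem hΔ_nonempty
  have hΔ_width : Δ ≤ n - u := hΔ_eq ▸ rank_le_width _
  constructor
  · exact Nat.sInf_le ⟨MΔᵀ, by rwa [rank_transpose], by rw [transpose_map, ← hΔ_eq]; omega⟩
  refine Nat.lt_of_succ_le (le_csInf ⟨n, 1, by simp, ?_⟩ ?_)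
  · rw [Matrix.map_one _ (map_zero _) (map_one _), Matrix.mul_one]
    have := H.rank_le_height
    omega
  rintro i ⟨M, hM, hM_weight⟩
  by_contra! hi
  obtain ⟨w, hw, h_extend⟩ :=
    exists_linearIndependent_rank_mul_map_le H M hM (Nat.le_of_lt_succ hi) (Nat.sub_le n u)
  have hΔ_w := hΔ_le w hw
  omega

/-- Wiretap bound: with
`Δ_u = min{ rank(H·Mᵀ) : M ∈ F_q^{(n−u)×n}, rank M = n−u }`, one has
`d_{n−u−Δ_u}(C) ≤ n − u < d_{n−u−Δ_u+1}(C)` whenever these weights are defined. -/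
theorem wiretap_generalized_weights
    {Fq Fqm : Type*} [Field Fq] [Field Fqm] [Algebra Fq Fqm]
    {n k u : ℕ} (C : Submodule Fqm (Fin n → Fqm))
    (hCk : Module.finrank Fqm C = k)
    (H : Matrix (Fin (n - k)) (Fin n) Fqm)
    (hH : ∀ x, x ∈ C ↔ H.mulVec x = 0)
    (hu1 : 1 ≤ u) (hun : u ≤ n)
    (Δ : ℕ)
    (hΔ : Δ = sInf { w | ∃ M : Matrix (Fin (n - u)) (Fin n) Fq,
      M.rank = n - u ∧ w = (H * (M.map (algebraMap Fq Fqm)).transpose).rank })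
    (hdef1 : 1 ≤ n - u - Δ) (hdef2 : n - u - Δ + 1 ≤ k) :
    genRankWeightPC Fq (k := k) H (n - u - Δ) ≤ n - u ∧
      n - u < genRankWeightPC Fq (k := k) H (n - u - Δ + 1) :=
  wiretap_generalized_weights_general H hu1 hun Δ hΔ hdef2
end

section
/- For an element x ∈ F_{q^m} written in a fixed F_q-basis, and a codeword x = (x_1,...,x_n) ∈ (F_{q^m})^n with coordinate expansion matrix M_B(x) ∈ F_q^{m×n} (i-th column the coordinate vector of x_i), the F_q-dimension of the row space of the block matrix stacking M_B(x_1),...,M_B(x_r) for a basis x_1,...,x_r of a subcode D equals the F_q-dimension of the column span of the matrix whose rows are x_1,...,x_r; hence the matrix-support definition of generalized rank weights (Jurrius–Pellikaan) coincides with the q-support definition. -/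
/-!
Stacking the expansion matrices `M_B(x_i)` gives a single matrix over `F_q` whose row space is
the matrix support. Its `j`-th column is the `B`-expansion of the `j`-th column of the matrix
with rows `x_i`, so its column space is the image of the q-support under an `F_q`-linear
isomorphism. Row rank equals column rank.
-/

open Matrix

section

open Module Submodule Set

variable {K V : Type*} [Field K] [AddCommGroup V] [Module K V]

theorem Matrix.finrank_span_row_eq_finrank_span_col {m n : Type*} [Finite m] [Fintype n]
    (A : Matrix m n K) :
    finrank K (span K (range A.row)) = finrank K (span K (range A.col)) := by
  rw [← A.rank_eq_finrank_span_row, A.rank_eq_finrank_span_cols]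

theorem LinearEquiv.finrank_span_range_comp {W ν : Type*} [AddCommGroup W] [Module K W]
    (e : V ≃ₗ[K] W) (v : ν → V) :
    finrank K (span K (range (e ∘ v))) = finrank K (span K (range v)) := by
  rw [Set.range_comp, span_image_linearEquiv, LinearEquiv.finrank_map_eq]

namespace Module.Basis

variable {ι : Type*} [Finite ι]

noncomputable def piCoordEquiv (κ : Type*) (B : Basis ι K V) : (κ → V) ≃ₗ[K] (κ × ι → K) :=
  (LinearEquiv.piCongrRight fun _ => B.equivFun).trans (LinearEquiv.curry K K κ ι).symm

theorem finrank_span_coord_rows_eq_finrank_span_cols {κ ν : Type*} [Finite κ] [Fintype ν]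
    (B : Basis ι K V) (x : κ → ν → V) :
    finrank K (span K (range fun p : κ × ι => fun j => B.repr (x p.1 j) p.2)) =
      finrank K (span K (range fun j i => x i j)) := by
  let A : Matrix (κ × ι) ν K := of fun p j => B.repr (x p.1 j) p.2
  have hcol : A.col = B.piCoordEquiv κ ∘ fun j i => x i j := rfl
  calc _ = finrank K (span K (range A.col)) := A.finrank_span_row_eq_finrank_span_col
    _ = _ := by rw [hcol, LinearEquiv.finrank_span_range_comp]

end Module.Basis

end

theorem matrixSupport_dim_eq_qSupport_dim_general
    {Fq Fqm : Type*} [Field Fq] [Field Fqm] [Algebra Fq Fqm]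
    {m n r : ℕ} (B : Module.Basis (Fin m) Fq Fqm)
    (xs : Fin r → Fin n → Fqm) :
    Module.finrank Fq (Submodule.span Fq
        (Set.range fun p : Fin r × Fin m =>
          fun j : Fin n => B.repr (xs p.1 j) p.2)) =
      Module.finrank Fq (Submodule.span Fq
        (Set.range fun j : Fin n => fun i : Fin r => xs i j)) :=
  B.finrank_span_coord_rows_eq_finrank_span_cols xs

/-- With respect to a fixed `F_q`-basis `B` of `F_{q^m}`, for a subcode `D`
with `F_{q^m}`-basis `x_1,…,x_r`, the `F_q`-dimension of the row space of the stacked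
coordinate-expansion matrices `M_B(x_1),…,M_B(x_r)` equals the `F_q`-dimension of the
column span of the matrix whose rows are `x_1,…,x_r`; hence the matrix-support
(Jurrius–Pellikaan) and q-support definitions of generalized rank weights coincide. -/
theorem matrixSupport_dim_eq_qSupport_dim
    {Fq Fqm : Type*} [Field Fq] [Field Fqm] [Algebra Fq Fqm]
    {m n r : ℕ} (B : Module.Basis (Fin m) Fq Fqm)
    (C D : Submodule Fqm (Fin n → Fqm)) (hDC : D ≤ C)
    (xs : Fin r → Fin n → Fqm)
    (hxs : LinearIndependent Fqm xs)
    (hxsD : Submodule.span Fqm (Set.range xs) = D) :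
    Module.finrank Fq (Submodule.span Fq
        (Set.range fun p : Fin r × Fin m =>
          fun j : Fin n => B.repr (xs p.1 j) p.2)) =
      Module.finrank Fq (Submodule.span Fq
        (Set.range fun j : Fin n => fun i : Fin r => xs i j)) :=
  matrixSupport_dim_eq_qSupport_dim_general B xs
end
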